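/- arXiv:1807.07642 — 7 statements merged into one kernel-verified Lean document; each statement's English description precedes it below -/
import Mathlib

section
/- The Sturm–Liouville boundary value problem (L_q, c₁, c₂) is regular (the homogeneous problem has only the zero solution) if and only if for every data f there exists a solution of the boundary value problem, and both are equivalent to D ≠ 0, where D = c₁(g(·,0))·c₂(g(·,1)) − c₂(g(·,0))·c₁(g(·,1)). -/
noncomputable def pSol (a b c f : ℕ → ℝ) : ℕ → ℝ
  | 0 => 0
  | 1 => 0
  | k+2 => (b (k+1) * pSol a b c f (k+1) - c k * pSol a b c f k - f (k+1)) / a (k+1)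

lemma pSol_zero (a b c f : ℕ → ℝ) : pSol a b c f 0 = 0 := by rw [pSol]
lemma pSol_one (a b c f : ℕ → ℝ) : pSol a b c f 1 = 0 := by rw [pSol]

lemma pSol_rec (a b c f : ℕ → ℝ) (k : ℕ) (hk : 1 ≤ k) (hak : a k ≠ 0) :
    -a k * pSol a b c f (k+1) + b k * pSol a b c f k - c (k-1) * pSol a b c f (k-1) = f k := by
  obtain ⟨m, rfl⟩ : ∃ m, k = m + 1 := ⟨k-1, by omega⟩
  have h2 : pSol a b c f (m+2)
      = (b (m+1) * pSol a b c f (m+1) - c m * pSol a b c f m - f (m+1)) / a (m+1) := by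
    rw [pSol]
  have hm : m + 1 - 1 = m := rfl
  rw [show m+1+1 = m+2 from rfl, h2, hm]
  field_simp
  ring

lemma zero_sol (n : ℕ) (a b c : ℕ → ℝ) (ha : ∀ k ≤ n, a k ≠ 0)
    (u : ℕ → ℝ)
    (hu : ∀ k, 1 ≤ k → k ≤ n → -a k * u (k+1) + b k * u k - c (k-1) * u (k-1) = 0)
    (h0 : u 0 = 0) (h1 : u 1 = 0) : ∀ k ≤ n + 1, u k = 0 := by
  intro k
  induction k using Nat.strong_induction_on with
  | _ k ih =>
    intro hk
    match k with
    | 0 => exact h0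
    | 1 => exact h1
    | (m+2) =>
      have hm1 : m + 1 ≤ n := by omega
      have h := hu (m+1) (by omega) hm1
      have e1 : u (m+1) = 0 := ih (m+1) (by omega) (by omega)
      have e0 : u m = 0 := ih m (by omega) (by omega)
      have hm : m + 1 - 1 = m := rfl
      rw [hm, e1, e0, show m+1+1 = m+2 from rfl] at h
      have hA := ha (m+1) hm1
      have : a (m+1) * u (m+2) = 0 := by linarith
      exact (mul_eq_zero.mp this).resolve_left hA

lemma span_lemma (n : ℕ) (hn : 1 ≤ n) (a b c : ℕ → ℝ)
    (ha : ∀ k ≤ n, a k ≠ 0) (hc : ∀ k ≤ n, c k ≠ 0)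
    (g0 g1 : ℕ → ℝ)
    (hg0 : ∀ k, 1 ≤ k → k ≤ n →
      -a k * g0 (k + 1) + b k * g0 k - c (k - 1) * g0 (k - 1) = 0)
    (hg00 : g0 0 = 0) (hg01 : g0 1 = -1 / a 0)
    (hg1 : ∀ k, 1 ≤ k → k ≤ n →
      -a k * g1 (k + 1) + b k * g1 k - c (k - 1) * g1 (k - 1) = 0)
    (hg11 : g1 1 = 0) (hg12 : g1 2 = -1 / a 1)
    (u : ℕ → ℝ)
    (hu : ∀ k, 1 ≤ k → k ≤ n → -a k * u (k+1) + b k * u k - c (k-1) * u (k-1) = 0) :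
    ∀ k ≤ n + 1, u k = (-a 0 * u 1) * g0 k + (c 0 * u 0) * g1 k := by
  have ha0 : a 0 ≠ 0 := ha 0 (by omega)
  have ha1 : a 1 ≠ 0 := ha 1 hn
  have hc0 : c 0 ≠ 0 := hc 0 (by omega)
  have hg10 : c 0 * g1 0 = 1 := by
    have h := hg1 1 le_rfl hn
    rw [show (1:ℕ) - 1 = 0 from rfl, hg11, show (1:ℕ)+1 = 2 from rfl, hg12] at h
    field_simp at h
    linarith
  set s : ℝ := -a 0 * u 1 with hs
  set t : ℝ := c 0 * u 0 with ht
  have key : ∀ k ≤ n + 1, u k - s * g0 k - t * g1 k = 0 := by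
    apply zero_sol n a b c ha
    · intro k h1 h2
      have e1 := hu k h1 h2
      have e2 := hg0 k h1 h2
      have e3 := hg1 k h1 h2
      linear_combination e1 - s * e2 - t * e3
    · rw [hg00]
      linear_combination (- u 0) * hg10
    · rw [hg01, hg11]
      field_simp
      rw [hs]; ring
  intro k hk
  have := key k hk
  linarith

/-- The Sturm–Liouville boundary value problem is regular (the homogeneous problem has only
the zero solution) iff for every data `f` a solution exists, and both are equivalent to
`D ≠ 0`, where `D = c₁(g(·,0))·c₂(g(·,1)) − c₂(g(·,0))·c₁(g(·,1))`. -/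
theorem regular_tfae (n : ℕ) (hn : 1 ≤ n) (a b c : ℕ → ℝ)
    (ha : ∀ k ≤ n, a k ≠ 0) (hc : ∀ k ≤ n, c k ≠ 0)
    (g0 g1 : ℕ → ℝ)
    (hg0 : ∀ k, 1 ≤ k → k ≤ n →
      -a k * g0 (k + 1) + b k * g0 k - c (k - 1) * g0 (k - 1) = 0)
    (hg00 : g0 0 = 0) (hg01 : g0 1 = -1 / a 0)
    (hg1 : ∀ k, 1 ≤ k → k ≤ n →
      -a k * g1 (k + 1) + b k * g1 k - c (k - 1) * g1 (k - 1) = 0)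
    (hg11 : g1 1 = 0) (hg12 : g1 2 = -1 / a 1) :
    ((∀ u : ℕ → ℝ,
        (∀ k, 1 ≤ k → k ≤ n →
          -a k * u (k + 1) + b k * u k - c (k - 1) * u (k - 1) = 0) →
        b 0 * u 0 - a 0 * u 1 = 0 →
        -c n * u n + b (n + 1) * u (n + 1) = 0 →
        ∀ k ≤ n + 1, u k = 0) ↔
      (∀ f : ℕ → ℝ, ∃ u : ℕ → ℝ,
        (∀ k, 1 ≤ k → k ≤ n →
          -a k * u (k + 1) + b k * u k - c (k - 1) * u (k - 1) = f k) ∧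
        b 0 * u 0 - a 0 * u 1 = f 0 ∧
        -c n * u n + b (n + 1) * u (n + 1) = f (n + 1))) ∧
    ((∀ u : ℕ → ℝ,
        (∀ k, 1 ≤ k → k ≤ n →
          -a k * u (k + 1) + b k * u k - c (k - 1) * u (k - 1) = 0) →
        b 0 * u 0 - a 0 * u 1 = 0 →
        -c n * u n + b (n + 1) * u (n + 1) = 0 →
        ∀ k ≤ n + 1, u k = 0) ↔
      (b 0 * g0 0 - a 0 * g0 1) * (-c n * g1 n + b (n + 1) * g1 (n + 1)) -
        (-c n * g0 n + b (n + 1) * g0 (n + 1)) * (b 0 * g1 0 - a 0 * g1 1) ≠ 0) := by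
  have ha0 : a 0 ≠ 0 := ha 0 (by omega)
  have ha1 : a 1 ≠ 0 := ha 1 hn
  have hc0 : c 0 ≠ 0 := hc 0 (by omega)
  have hC10 : b 0 * g0 0 - a 0 * g0 1 = 1 := by
    rw [hg00, hg01]; field_simp; ring
  have hg10 : c 0 * g1 0 = 1 := by
    have h := hg1 1 le_rfl hn
    rw [show (1:ℕ) - 1 = 0 from rfl, hg11, show (1:ℕ)+1 = 2 from rfl, hg12] at h
    field_simp at h
    linarith
  -- Reg ↔ D ≠ 0
  have hRD : (∀ u : ℕ → ℝ,
        (∀ k, 1 ≤ k → k ≤ n →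
          -a k * u (k + 1) + b k * u k - c (k - 1) * u (k - 1) = 0) →
        b 0 * u 0 - a 0 * u 1 = 0 →
        -c n * u n + b (n + 1) * u (n + 1) = 0 →
        ∀ k ≤ n + 1, u k = 0) ↔
      (b 0 * g0 0 - a 0 * g0 1) * (-c n * g1 n + b (n + 1) * g1 (n + 1)) -
        (-c n * g0 n + b (n + 1) * g0 (n + 1)) * (b 0 * g1 0 - a 0 * g1 1) ≠ 0 := by
    constructor
    · intro hReg hD0
      have h0 : g1 0 - (b 0 * g1 0 - a 0 * g1 1) * g0 0 = 0 :=
        hReg (fun k => g1 k - (b 0 * g1 0 - a 0 * g1 1) * g0 k)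
          (by
            intro k h1 h2
            show -a k * (g1 (k+1) - (b 0 * g1 0 - a 0 * g1 1) * g0 (k+1)) + _ - _ = 0
            linear_combination hg1 k h1 h2 - (b 0 * g1 0 - a 0 * g1 1) * hg0 k h1 h2)
          (by
            show b 0 * (g1 0 - (b 0 * g1 0 - a 0 * g1 1) * g0 0)
              - a 0 * (g1 1 - (b 0 * g1 0 - a 0 * g1 1) * g0 1) = 0
            linear_combination (-(b 0 * g1 0 - a 0 * g1 1)) * hC10)
          (by
            show -c n * (g1 n - (b 0 * g1 0 - a 0 * g1 1) * g0 n)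
              + b (n+1) * (g1 (n+1) - (b 0 * g1 0 - a 0 * g1 1) * g0 (n+1)) = 0
            linear_combination hD0 - (-c n * g1 n + b (n + 1) * g1 (n + 1)) * hC10)
          0 (by omega)
      exact one_ne_zero (by
        linear_combination (norm := ring_nf)
          -hg10 + c 0 * h0 + c 0 * (b 0 * g1 0 - a 0 * g1 1) * hg00)
    · intro hD u hu hb1 hb2 k hk
      obtain ⟨S, hSdef⟩ : ∃ x : ℝ, x = -a 0 * u 1 := ⟨_, rfl⟩
      obtain ⟨T, hTdef⟩ : ∃ x : ℝ, x = c 0 * u 0 := ⟨_, rfl⟩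
      have hspan : ∀ k ≤ n + 1, u k = S * g0 k + T * g1 k := by
        intro k hk
        rw [hSdef, hTdef]
        exact span_lemma n hn a b c ha hc g0 g1 hg0 hg00 hg01 hg1 hg11 hg12 u hu k hk
      have e0 := hspan 0 (by omega)
      have e1 := hspan 1 (by omega)
      have en := hspan n (by omega)
      have en1 := hspan (n+1) le_rfl
      rw [e0, e1] at hb1
      rw [en, en1] at hb2
      have E1 : S + T * (b 0 * g1 0 - a 0 * g1 1) = 0 := by
        linear_combination hb1 - S * hC10
      have E2 : S * (-c n * g0 n + b (n + 1) * g0 (n + 1))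
          + T * (-c n * g1 n + b (n + 1) * g1 (n + 1)) = 0 := by
        linear_combination hb2
      have h3 : T * ((b 0 * g0 0 - a 0 * g0 1) * (-c n * g1 n + b (n + 1) * g1 (n + 1)) -
          (-c n * g0 n + b (n + 1) * g0 (n + 1)) * (b 0 * g1 0 - a 0 * g1 1)) = 0 := by
        linear_combination (b 0 * g0 0 - a 0 * g0 1) * E2
          - (-c n * g0 n + b (n + 1) * g0 (n + 1)) * E1
          - (S * (-c n * g0 n + b (n + 1) * g0 (n + 1))) * hC10
      have hT0 : T = 0 := (mul_eq_zero.mp h3).resolve_right hD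
      have hS0 : S = 0 := by
        linear_combination E1 - (b 0 * g1 0 - a 0 * g1 1) * hT0
      rw [hspan k hk, hS0, hT0]; ring
  refine ⟨hRD.trans (Iff.symm ⟨?_, fun hD f => ?_⟩), hRD⟩
  · -- Ex → D ≠ 0
    intro hEx hD0
    obtain ⟨u, hu, hb1, hb2⟩ := hEx (fun k => if k = n+1 then 1 else 0)
    have hu' : ∀ k, 1 ≤ k → k ≤ n →
        -a k * u (k+1) + b k * u k - c (k-1) * u (k-1) = 0 := by
      intro k h1 h2
      have h : -a k * u (k+1) + b k * u k - c (k-1) * u (k-1)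
          = if k = n+1 then (1:ℝ) else 0 := hu k h1 h2
      rwa [if_neg (by omega : ¬ k = n+1)] at h
    have hb1' : b 0 * u 0 - a 0 * u 1 = 0 := by
      have h : b 0 * u 0 - a 0 * u 1 = if (0:ℕ) = n+1 then (1:ℝ) else 0 := hb1
      rwa [if_neg (by omega : ¬ (0:ℕ) = n+1)] at h
    have hb2' : -c n * u n + b (n+1) * u (n+1) = 1 := by
      have h : -c n * u n + b (n+1) * u (n+1) = if n+1 = n+1 then (1:ℝ) else 0 := hb2
      rwa [if_pos rfl] at h
    obtain ⟨S, hSdef⟩ : ∃ x : ℝ, x = -a 0 * u 1 := ⟨_, rfl⟩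
    obtain ⟨T, hTdef⟩ : ∃ x : ℝ, x = c 0 * u 0 := ⟨_, rfl⟩
    have hspan : ∀ k ≤ n + 1, u k = S * g0 k + T * g1 k := by
      intro k hk
      rw [hSdef, hTdef]
      exact span_lemma n hn a b c ha hc g0 g1 hg0 hg00 hg01 hg1 hg11 hg12 u hu' k hk
    have e0 := hspan 0 (by omega)
    have e1 := hspan 1 (by omega)
    have en := hspan n (by omega)
    have en1 := hspan (n+1) le_rfl
    rw [e0, e1] at hb1'
    rw [en, en1] at hb2'
    have E1 : S + T * (b 0 * g1 0 - a 0 * g1 1) = 0 := by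
      linear_combination hb1' - S * hC10
    refine one_ne_zero (α := ℝ) ?_
    linear_combination -hb2' + (-c n * g0 n + b (n + 1) * g0 (n + 1)) * E1
      + T * hD0 - (T * (-c n * g1 n + b (n + 1) * g1 (n + 1))) * hC10
  · -- D ≠ 0 → Ex
    obtain ⟨w, hw0, hw1, hwrec⟩ : ∃ w : ℕ → ℝ, w 0 = 0 ∧ w 1 = 0 ∧
        ∀ k, 1 ≤ k → k ≤ n → -a k * w (k+1) + b k * w k - c (k-1) * w (k-1) = f k :=
      ⟨pSol a b c f, pSol_zero a b c f, pSol_one a b c f,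
        fun k h1 h2 => pSol_rec a b c f k h1 (ha k h2)⟩
    obtain ⟨y, hy⟩ : ∃ x : ℝ, x = f (n+1) - (-c n * w n + b (n+1) * w (n+1)) := ⟨_, rfl⟩
    obtain ⟨T, hTdef⟩ : ∃ x : ℝ,
        x = (y - (-c n * g0 n + b (n + 1) * g0 (n + 1)) * f 0) /
          ((b 0 * g0 0 - a 0 * g0 1) * (-c n * g1 n + b (n + 1) * g1 (n + 1)) -
            (-c n * g0 n + b (n + 1) * g0 (n + 1)) * (b 0 * g1 0 - a 0 * g1 1)) := ⟨_, rfl⟩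
    have hTD : T * ((b 0 * g0 0 - a 0 * g0 1) * (-c n * g1 n + b (n + 1) * g1 (n + 1)) -
        (-c n * g0 n + b (n + 1) * g0 (n + 1)) * (b 0 * g1 0 - a 0 * g1 1))
        = y - (-c n * g0 n + b (n + 1) * g0 (n + 1)) * f 0 := by
      rw [hTdef]; exact div_mul_cancel₀ _ hD
    obtain ⟨S, hSdef⟩ : ∃ x : ℝ, x = f 0 - T * (b 0 * g1 0 - a 0 * g1 1) := ⟨_, rfl⟩
    refine ⟨fun k => w k + S * g0 k + T * g1 k, ?_, ?_, ?_⟩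
    · intro k h1 h2
      show -a k * (w (k+1) + S * g0 (k+1) + T * g1 (k+1)) + _ - _ = f k
      linear_combination hwrec k h1 h2 + S * hg0 k h1 h2 + T * hg1 k h1 h2
    · show b 0 * (w 0 + S * g0 0 + T * g1 0) - a 0 * (w 1 + S * g0 1 + T * g1 1) = f 0
      linear_combination b 0 * hw0 - a 0 * hw1 + S * hC10 + hSdef
    · show -c n * (w n + S * g0 n + T * g1 n)
        + b (n+1) * (w (n+1) + S * g0 (n+1) + T * g1 (n+1)) = f (n+1)
      linear_combination hy + hTD + (-c n * g0 n + b (n + 1) * g0 (n + 1)) * hSdef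
        - (T * (-c n * g1 n + b (n + 1) * g1 (n + 1))) * hC10
end

section
/- If the Sturm–Liouville boundary value problem is regular with resolvent kernel R (i.e., for each s, R(·,s) solves the boundary value problem with data the Dirac function ε_s), then for any data f, the function u(k) = Σ_{s=0}^{n+1} R(k,s) f(s) is the unique solution of the boundary value problem with data f. -/
/-- If the Sturm–Liouville boundary value problem is regular and `R` is its resolvent
kernel (for each `s`, `R(·,s)` solves the boundary value problem with data the Dirac
function `ε_s`), then for any data `f` the function `u(k) = Σ_{s=0}^{n+1} R(k,s)·f(s)` is
the unique solution of the boundary value problem with data `f`. -/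
theorem resolvent_kernel_solves (n : ℕ) (hn : 1 ≤ n) (a b c : ℕ → ℝ)
    (ha : ∀ k ≤ n, a k ≠ 0) (hc : ∀ k ≤ n, c k ≠ 0)
    (hreg : ∀ u : ℕ → ℝ,
      (∀ k, 1 ≤ k → k ≤ n →
        -a k * u (k + 1) + b k * u k - c (k - 1) * u (k - 1) = 0) →
      b 0 * u 0 - a 0 * u 1 = 0 →
      -c n * u n + b (n + 1) * u (n + 1) = 0 →
      ∀ k ≤ n + 1, u k = 0)
    (R : ℕ → ℕ → ℝ)
    (hR : ∀ s ≤ n + 1,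
      (∀ k, 1 ≤ k → k ≤ n →
        -a k * R (k + 1) s + b k * R k s - c (k - 1) * R (k - 1) s =
          (if k = s then (1 : ℝ) else 0)) ∧
      b 0 * R 0 s - a 0 * R 1 s = (if 0 = s then (1 : ℝ) else 0) ∧
      -c n * R n s + b (n + 1) * R (n + 1) s = (if n + 1 = s then (1 : ℝ) else 0))
    (f : ℕ → ℝ) (u : ℕ → ℝ)
    (hu : ∀ k, u k = ∑ s ∈ Finset.range (n + 2), R k s * f s) :
    ((∀ k, 1 ≤ k → k ≤ n →
        -a k * u (k + 1) + b k * u k - c (k - 1) * u (k - 1) = f k) ∧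
      b 0 * u 0 - a 0 * u 1 = f 0 ∧
      -c n * u n + b (n + 1) * u (n + 1) = f (n + 1)) ∧
    ∀ w : ℕ → ℝ,
      ((∀ k, 1 ≤ k → k ≤ n →
          -a k * w (k + 1) + b k * w k - c (k - 1) * w (k - 1) = f k) ∧
        b 0 * w 0 - a 0 * w 1 = f 0 ∧
        -c n * w n + b (n + 1) * w (n + 1) = f (n + 1)) →
      ∀ k ≤ n + 1, w k = u k := by
  have expand : ∀ (p q r : ℝ) (g h i : ℕ → ℝ),
      -p * (∑ s ∈ Finset.range (n + 2), g s * f s)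
        + q * (∑ s ∈ Finset.range (n + 2), h s * f s)
        - r * (∑ s ∈ Finset.range (n + 2), i s * f s)
      = ∑ s ∈ Finset.range (n + 2), (-p * g s + q * h s - r * i s) * f s := by
    intro p q r g h i
    rw [Finset.sum_congr rfl (fun s _ => by ring :
      ∀ s ∈ Finset.range (n + 2), (-p * g s + q * h s - r * i s) * f s
        = -(p * (g s * f s)) + q * (h s * f s) - r * (i s * f s))]
    rw [Finset.sum_sub_distrib, Finset.sum_add_distrib, Finset.sum_neg_distrib,
      ← Finset.mul_sum, ← Finset.mul_sum, ← Finset.mul_sum]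
    ring
  have delta : ∀ k ≤ n + 1,
      (∑ s ∈ Finset.range (n + 2), (if k = s then (1 : ℝ) else 0) * f s) = f k := by
    intro k hk
    rw [Finset.sum_congr rfl (fun s _ => by
      by_cases h : k = s
      · rw [if_pos h, if_pos h, one_mul]
      · rw [if_neg h, if_neg h, zero_mul] :
      ∀ s ∈ Finset.range (n + 2), (if k = s then (1 : ℝ) else 0) * f s
        = if k = s then f s else 0)]
    rw [Finset.sum_ite_eq]
    simp [Finset.mem_range]; omega
  have hsol : (∀ k, 1 ≤ k → k ≤ n →
        -a k * u (k + 1) + b k * u k - c (k - 1) * u (k - 1) = f k) ∧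
      b 0 * u 0 - a 0 * u 1 = f 0 ∧
      -c n * u n + b (n + 1) * u (n + 1) = f (n + 1) := by
    refine ⟨?_, ?_, ?_⟩
    · intro k hk1 hk2
      rw [hu, hu, hu, expand]
      rw [Finset.sum_congr rfl (fun s hs => by
        rw [(hR s (by have := Finset.mem_range.mp hs; omega)).1 k hk1 hk2])]
      exact delta k (by omega)
    · have : b 0 * u 0 - a 0 * u 1
          = -(0:ℝ) * (∑ s ∈ Finset.range (n + 2), R 2 s * f s)
            + b 0 * (∑ s ∈ Finset.range (n + 2), R 0 s * f s)
            - a 0 * (∑ s ∈ Finset.range (n + 2), R 1 s * f s) := by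
        rw [hu, hu]; ring
      rw [this, expand]
      rw [Finset.sum_congr rfl (fun s hs => by
        have h2 := (hR s (by have := Finset.mem_range.mp hs; omega)).2.1
        rw [show (-(0:ℝ) * R 2 s + b 0 * R 0 s - a 0 * R 1 s)
            = b 0 * R 0 s - a 0 * R 1 s by ring, h2])]
      exact delta 0 (by omega)
    · have heq : -c n * u n + b (n + 1) * u (n + 1)
          = -(c n) * (∑ s ∈ Finset.range (n + 2), R n s * f s)
            + b (n + 1) * (∑ s ∈ Finset.range (n + 2), R (n + 1) s * f s)
            - 0 * (∑ s ∈ Finset.range (n + 2), R 0 s * f s) := by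
        rw [hu, hu]; ring
      rw [heq, expand]
      · rw [Finset.sum_congr rfl (fun s hs => by
          have h2 := (hR s (by have := Finset.mem_range.mp hs; omega)).2.2
          rw [show (-(c n) * R n s + b (n+1) * R (n+1) s - 0 * R 0 s)
              = -c n * R n s + b (n+1) * R (n+1) s by ring, h2])]
        exact delta (n + 1) (by omega)
  refine ⟨hsol, ?_⟩
  intro w hw k hk
  have h0 := hreg (fun k => w k - u k)
    (fun k hk1 hk2 => by
      have h1 := hw.1 k hk1 hk2; have h2 := hsol.1 k hk1 hk2
      show -a k * (w (k+1) - u (k+1)) + b k * (w k - u k)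
          - c (k-1) * (w (k-1) - u (k-1)) = 0
      linear_combination h1 - h2)
    (by have h1 := hw.2.1; have h2 := hsol.2.1
        show b 0 * (w 0 - u 0) - a 0 * (w 1 - u 1) = 0
        linear_combination h1 - h2)
    (by have h1 := hw.2.2; have h2 := hsol.2.2
        show -c n * (w n - u n) + b (n+1) * (w (n+1) - u (n+1)) = 0
        linear_combination h1 - h2)
    k hk
  have : w k - u k = 0 := h0
  linarith
end

section
/- With Φ, Ψ the fundamental solutions (Φ(0) = a(0), Φ(1) = b(0); Ψ(n) = b(n+1), Ψ(n+1) = c(n)), one has c₂(Φ) = a(0)c(0)·D and c₁(Ψ) = c(0)a(n)ρ(n)·D = w[Ψ,Φ](0), where D = c₁(g(·,0))c₂(g(·,1)) − c₂(g(·,0))c₁(g(·,1)). -/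
/-- With `Φ, Ψ` the fundamental solutions, `c₂(Φ) = a(0)·c(0)·D` and
`c₁(Ψ) = c(0)·a(n)·ρ(n)·D = w[Ψ,Φ](0)`, where
`D = c₁(g(·,0))·c₂(g(·,1)) − c₂(g(·,0))·c₁(g(·,1))`. -/
theorem fundamental_solutions_values (n : ℕ) (hn : 1 ≤ n) (a b c : ℕ → ℝ)
    (ha : ∀ k ≤ n, a k ≠ 0) (hc : ∀ k ≤ n, c k ≠ 0)
    (g0 g1 : ℕ → ℝ)
    (hg0 : ∀ k, 1 ≤ k → k ≤ n →
      -a k * g0 (k + 1) + b k * g0 k - c (k - 1) * g0 (k - 1) = 0)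
    (hg00 : g0 0 = 0) (hg01 : g0 1 = -1 / a 0)
    (hg1 : ∀ k, 1 ≤ k → k ≤ n →
      -a k * g1 (k + 1) + b k * g1 k - c (k - 1) * g1 (k - 1) = 0)
    (hg11 : g1 1 = 0) (hg12 : g1 2 = -1 / a 1)
    (Φ Ψ : ℕ → ℝ)
    (hΦ : ∀ k, 1 ≤ k → k ≤ n →
      -a k * Φ (k + 1) + b k * Φ k - c (k - 1) * Φ (k - 1) = 0)
    (hΦ0 : Φ 0 = a 0) (hΦ1 : Φ 1 = b 0)
    (hΨ : ∀ k, 1 ≤ k → k ≤ n →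
      -a k * Ψ (k + 1) + b k * Ψ k - c (k - 1) * Ψ (k - 1) = 0)
    (hΨn : Ψ n = b (n + 1)) (hΨn1 : Ψ (n + 1) = c n)
    (D : ℝ)
    (hD : D = (b 0 * g0 0 - a 0 * g0 1) * (-c n * g1 n + b (n + 1) * g1 (n + 1)) -
      (-c n * g0 n + b (n + 1) * g0 (n + 1)) * (b 0 * g1 0 - a 0 * g1 1)) :
    -c n * Φ n + b (n + 1) * Φ (n + 1) = a 0 * c 0 * D ∧
    b 0 * Ψ 0 - a 0 * Ψ 1 = c 0 * a n * (∏ s ∈ Finset.range n, a s / c s) * D ∧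
    b 0 * Ψ 0 - a 0 * Ψ 1 = Ψ 0 * Φ 1 - Φ 0 * Ψ 1 := by
  have ha0 : a 0 ≠ 0 := ha 0 (Nat.zero_le n)
  have hc0 : c 0 ≠ 0 := hc 0 (Nat.zero_le n)
  have ha1 : a 1 ≠ 0 := ha 1 hn
  -- value of g1 at 0
  have hg10 : g1 0 = 1 / c 0 := by
    have e := hg1 1 le_rfl hn
    norm_num [hg11, hg12] at e
    field_simp
    field_simp [ha1] at e
    linarith
  -- Φ is a combination of g0 and g1
  have key : ∀ k, k ≤ n →
      (Φ k = -(a 0 * b 0) * g0 k + (a 0 * c 0) * g1 k ∧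
       Φ (k+1) = -(a 0 * b 0) * g0 (k+1) + (a 0 * c 0) * g1 (k+1)) := by
    intro k hk
    induction k with
    | zero =>
      constructor
      · rw [hΦ0, hg00, hg10]; field_simp; ring
      · rw [hΦ1, hg01, hg11]; field_simp; ring
    | succ k ih =>
      have hk' : k ≤ n := Nat.le_of_succ_le hk
      obtain ⟨ih1, ih2⟩ := ih hk'
      refine ⟨ih2, ?_⟩
      have eΦ := hΦ (k+1) (Nat.le_add_left 1 k) hk
      have eg0 := hg0 (k+1) (Nat.le_add_left 1 k) hk
      have eg1 := hg1 (k+1) (Nat.le_add_left 1 k) hk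
      simp only [Nat.add_sub_cancel] at eΦ eg0 eg1
      have h2 : a (k+1) * Φ (k+2) =
          a (k+1) * (-(a 0 * b 0) * g0 (k+2) + (a 0 * c 0) * g1 (k+2)) := by
        linear_combination (-1 : ℝ) * eΦ + (-(a 0 * b 0)) * eg0 + (a 0 * c 0) * eg1
          + b (k+1) * ih2 - c k * ih1
      exact mul_left_cancel₀ (ha (k+1) hk) h2
  obtain ⟨kn1, kn2⟩ := key n le_rfl
  -- First statement
  have first : -c n * Φ n + b (n + 1) * Φ (n + 1) = a 0 * c 0 * D := by
    rw [kn1, kn2, hD, hg00, hg01, hg10, hg11]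
    field_simp
    ring
  refine ⟨first, ?_, ?_⟩
  · -- Wronskian identity
    set W : ℕ → ℝ := fun k => Ψ k * Φ (k+1) - Φ k * Ψ (k+1) with hWdef
    have hW : ∀ k, k ≤ n →
        W k * ∏ s ∈ Finset.range k, a (s+1) = W 0 * ∏ s ∈ Finset.range k, c s := by
      intro k hk
      induction k with
      | zero => simp
      | succ k ih =>
        have hk' : k ≤ n := Nat.le_of_succ_le hk
        have step : a (k+1) * W (k+1) = c k * W k := by
          have eΦ := hΦ (k+1) (Nat.le_add_left 1 k) hk
          have eΨ := hΨ (k+1) (Nat.le_add_left 1 k) hk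
          simp only [Nat.add_sub_cancel] at eΦ eΨ
          simp only [hWdef]
          linear_combination (-(Ψ (k+1))) * eΦ + Φ (k+1) * eΨ
        rw [Finset.prod_range_succ, Finset.prod_range_succ]
        have ih' := ih hk'
        linear_combination (∏ s ∈ Finset.range k, a (s+1)) * step + c k * ih'
    have hWn := hW n le_rfl
    have hWnval : W n = a 0 * c 0 * D := by
      simp only [hWdef]
      rw [hΨn, hΨn1]
      linear_combination first
    have hW0 : W 0 = b 0 * Ψ 0 - a 0 * Ψ 1 := by
      simp only [hWdef, hΦ0, hΦ1]; ring
    have hcprod : (∏ s ∈ Finset.range n, c s) ≠ 0 :=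
      Finset.prod_ne_zero_iff.mpr fun s hs => hc s (Nat.le_of_lt (Finset.mem_range.mp hs))
    have hprod : (∏ s ∈ Finset.range n, a (s+1)) * a 0 =
        (∏ s ∈ Finset.range n, a s) * a n := by
      rw [← Finset.prod_range_succ']; exact Finset.prod_range_succ a n
    rw [← hW0]
    rw [Finset.prod_div_distrib]
    apply mul_right_cancel₀ hcprod
    have hρ : (∏ s ∈ Finset.range n, a s) / (∏ s ∈ Finset.range n, c s) *
        (∏ s ∈ Finset.range n, c s) = ∏ s ∈ Finset.range n, a s :=
      div_mul_cancel₀ _ hcprod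
    linear_combination (-1 : ℝ) * hWn + (∏ s ∈ Finset.range n, a (s+1)) * hWnval + (c 0 * D) * hprod - (c 0 * a n * D) * hρ
  · rw [hΦ0, hΦ1]; ring
end

section
/- The Sturm–Liouville boundary value problem is regular if and only if b(0)Ψ(0) ≠ a(0)Ψ(1), equivalently iff c(n)Φ(n) ≠ b(n+1)Φ(n+1), and in that case the resolvent kernel is given by R(k,s) = Φ(min{k,s})·Ψ(max{k,s})·ρ(s) / (a(0)·[b(0)Ψ(0) − a(0)Ψ(1)]) for all k, s ∈ {0,...,n+1}. -/
private lemma aux_det (n : ℕ) (a b c Φ : ℕ → ℝ) (ha : ∀ k ≤ n, a k ≠ 0)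
    (hΦ : ∀ k, 1 ≤ k → k ≤ n → -a k * Φ (k + 1) + b k * Φ k - c (k - 1) * Φ (k - 1) = 0)
    (u : ℕ → ℝ)
    (hu : ∀ k, 1 ≤ k → k ≤ n → -a k * u (k + 1) + b k * u k - c (k - 1) * u (k - 1) = 0)
    (lam : ℝ) (h0 : u 0 = lam * Φ 0) (h1 : u 1 = lam * Φ 1) :
    ∀ k ≤ n + 1, u k = lam * Φ k := by
  intro k
  induction k using Nat.strong_induction_on with
  | _ k ih =>
    intro hk
    match k, hk, ih with
    | 0, _, _ => exact h0
    | 1, _, _ => exact h1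
    | (j+2), hk, ih =>
      have hj : 1 ≤ j + 1 := by omega
      have hj2 : j + 1 ≤ n := by omega
      have e1 := hu (j+1) hj hj2
      have e2 := hΦ (j+1) hj hj2
      simp only [Nat.add_sub_cancel] at e1 e2
      have i0 := ih j (by omega) (by omega)
      have i1 := ih (j+1) (by omega) (by omega)
      have hna : a (j+1) ≠ 0 := ha (j+1) hj2
      have h : a (j+1) * u (j+1+1) = a (j+1) * (lam * Φ (j+1+1)) := by
        linear_combination (-1 : ℝ) * e1 + lam * e2 + b (j+1) * i1 - c j * i0
      exact mul_left_cancel₀ hna h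

/-- The Sturm–Liouville boundary value problem is regular iff `b(0)Ψ(0) ≠ a(0)Ψ(1)`,
equivalently iff `c(n)Φ(n) ≠ b(n+1)Φ(n+1)`, and in that case the resolvent kernel is
`R(k,s) = Φ(min{k,s})·Ψ(max{k,s})·ρ(s) / (a(0)·(b(0)Ψ(0) − a(0)Ψ(1)))`. -/
theorem regular_iff_and_resolvent_formula (n : ℕ) (hn : 1 ≤ n) (a b c : ℕ → ℝ)
    (ha : ∀ k ≤ n, a k ≠ 0) (hc : ∀ k ≤ n, c k ≠ 0)
    (Φ Ψ : ℕ → ℝ)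
    (hΦ : ∀ k, 1 ≤ k → k ≤ n →
      -a k * Φ (k + 1) + b k * Φ k - c (k - 1) * Φ (k - 1) = 0)
    (hΦ0 : Φ 0 = a 0) (hΦ1 : Φ 1 = b 0)
    (hΨ : ∀ k, 1 ≤ k → k ≤ n →
      -a k * Ψ (k + 1) + b k * Ψ k - c (k - 1) * Ψ (k - 1) = 0)
    (hΨn : Ψ n = b (n + 1)) (hΨn1 : Ψ (n + 1) = c n)
    (R : ℕ → ℕ → ℝ)
    (hR : ∀ s ≤ n + 1,
      (∀ k, 1 ≤ k → k ≤ n →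
        -a k * R (k + 1) s + b k * R k s - c (k - 1) * R (k - 1) s =
          (if k = s then (1 : ℝ) else 0)) ∧
      b 0 * R 0 s - a 0 * R 1 s = (if 0 = s then (1 : ℝ) else 0) ∧
      -c n * R n s + b (n + 1) * R (n + 1) s = (if n + 1 = s then (1 : ℝ) else 0)) :
    ((∀ u : ℕ → ℝ,
        (∀ k, 1 ≤ k → k ≤ n →
          -a k * u (k + 1) + b k * u k - c (k - 1) * u (k - 1) = 0) →
        b 0 * u 0 - a 0 * u 1 = 0 →
        -c n * u n + b (n + 1) * u (n + 1) = 0 →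
        ∀ k ≤ n + 1, u k = 0) ↔
      b 0 * Ψ 0 ≠ a 0 * Ψ 1) ∧
    ((∀ u : ℕ → ℝ,
        (∀ k, 1 ≤ k → k ≤ n →
          -a k * u (k + 1) + b k * u k - c (k - 1) * u (k - 1) = 0) →
        b 0 * u 0 - a 0 * u 1 = 0 →
        -c n * u n + b (n + 1) * u (n + 1) = 0 →
        ∀ k ≤ n + 1, u k = 0) ↔
      c n * Φ n ≠ b (n + 1) * Φ (n + 1)) ∧
    (b 0 * Ψ 0 ≠ a 0 * Ψ 1 →
      ∀ k ≤ n + 1, ∀ s ≤ n + 1,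
        R k s = Φ (min k s) * Ψ (max k s) * (∏ j ∈ Finset.range s, a j / c j) /
          (a 0 * (b 0 * Ψ 0 - a 0 * Ψ 1))) := by
  have ha0 : a 0 ≠ 0 := ha 0 (Nat.zero_le n)
  have hcn : c n ≠ 0 := hc n le_rfl
  -- the Wronskian-type invariant
  have keyA : ∀ j ≤ n, (∏ i ∈ Finset.range j, a i / c i) *
      (a j * (Φ j * Ψ (j + 1) - Φ (j + 1) * Ψ j)) =
      -(a 0 * (b 0 * Ψ 0 - a 0 * Ψ 1)) := by
    intro j
    induction j with
    | zero =>
      intro _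
      rw [Finset.prod_range_zero, one_mul, hΦ0, hΦ1]
      ring
    | succ j ihj =>
      intro hj
      have hcj : c j ≠ 0 := hc j (by omega)
      have e1 := hΦ (j+1) (by omega) (by omega)
      have e2 := hΨ (j+1) (by omega) (by omega)
      simp only [Nat.add_sub_cancel] at e1 e2
      have hw : a (j+1) * (Φ (j+1) * Ψ (j+1+1) - Φ (j+1+1) * Ψ (j+1))
          = c j * (Φ j * Ψ (j+1) - Φ (j+1) * Ψ j) := by
        linear_combination Ψ (j+1) * e1 - Φ (j+1) * e2
      have h4 : (a j / c j) * (c j * (Φ j * Ψ (j + 1) - Φ (j + 1) * Ψ j)) =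
          a j * (Φ j * Ψ (j + 1) - Φ (j + 1) * Ψ j) := by
        field_simp
      rw [Finset.prod_range_succ, hw, mul_assoc, h4]
      exact ihj (by omega)
  have keyB : ∀ j ≤ n, (∏ i ∈ Finset.range (j+1), a i / c i) *
      (c j * (Φ j * Ψ (j + 1) - Φ (j + 1) * Ψ j)) =
      -(a 0 * (b 0 * Ψ 0 - a 0 * Ψ 1)) := by
    intro j hj
    have hcj : c j ≠ 0 := hc j hj
    have h4 : (a j / c j) * (c j * (Φ j * Ψ (j + 1) - Φ (j + 1) * Ψ j)) =
        a j * (Φ j * Ψ (j + 1) - Φ (j + 1) * Ψ j) := by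
      field_simp
    rw [Finset.prod_range_succ, mul_assoc, h4]
    exact keyA j hj
  have hPne : ∀ s ≤ n + 1, (∏ i ∈ Finset.range s, a i / c i) ≠ 0 := by
    intro s hs
    refine Finset.prod_ne_zero_iff.mpr fun i hi => ?_
    have : i < s := Finset.mem_range.mp hi
    exact div_ne_zero (ha i (by omega)) (hc i (by omega))
  have hDn : (∏ i ∈ Finset.range n, a i / c i) *
      (a n * (c n * Φ n - b (n+1) * Φ (n+1))) =
      -(a 0 * (b 0 * Ψ 0 - a 0 * Ψ 1)) := by
    have h := keyA n le_rfl
    rw [hΨn1, hΨn] at h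
    linear_combination h
  -- first equivalence
  have hreg : (∀ u : ℕ → ℝ,
        (∀ k, 1 ≤ k → k ≤ n →
          -a k * u (k + 1) + b k * u k - c (k - 1) * u (k - 1) = 0) →
        b 0 * u 0 - a 0 * u 1 = 0 →
        -c n * u n + b (n + 1) * u (n + 1) = 0 →
        ∀ k ≤ n + 1, u k = 0) ↔
      b 0 * Ψ 0 ≠ a 0 * Ψ 1 := by
    constructor
    · intro hu hW
      have hW' : b 0 * Ψ 0 - a 0 * Ψ 1 = 0 := by rw [hW]; ring
      have h := hu Ψ hΨ hW' (by rw [hΨn, hΨn1]; ring) (n+1) le_rfl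
      rw [hΨn1] at h
      exact hcn h
    · intro hW u hueq hbc1 hbc2 k hk
      have hW0 : b 0 * Ψ 0 - a 0 * Ψ 1 ≠ 0 := sub_ne_zero.mpr hW
      have h0 : u 0 = (u 0 / a 0) * Φ 0 := by rw [hΦ0]; field_simp
      have h1 : u 1 = (u 0 / a 0) * Φ 1 := by
        rw [hΦ1]
        field_simp
        linear_combination -hbc1
      have hall := aux_det n a b c Φ ha hΦ u hueq (u 0 / a 0) h0 h1
      have hΦbc : c n * Φ n - b (n+1) * Φ (n+1) ≠ 0 := by
        intro h
        rw [h, mul_zero, mul_zero] at hDn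
        exact hW0 (by
          have := hDn
          have h2 : a 0 * (b 0 * Ψ 0 - a 0 * Ψ 1) = 0 := by linarith
          rcases mul_eq_zero.mp h2 with h3 | h3
          · exact absurd h3 ha0
          · exact h3)
      have hlam0 : u 0 / a 0 = 0 := by
        have h2 := hall n (by omega)
        have h3 := hall (n+1) le_rfl
        rw [h2, h3] at hbc2
        have h4 : (u 0 / a 0) * (c n * Φ n - b (n+1) * Φ (n+1)) = 0 := by
          linear_combination -hbc2
        rcases mul_eq_zero.mp h4 with h | h
        · exact h
        · exact absurd h hΦbc
      rw [hall k hk, hlam0, zero_mul]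
  have hiff2 : b 0 * Ψ 0 ≠ a 0 * Ψ 1 ↔ c n * Φ n ≠ b (n + 1) * Φ (n + 1) := by
    have hP : (∏ i ∈ Finset.range n, a i / c i) ≠ 0 := hPne n (by omega)
    have han : a n ≠ 0 := ha n le_rfl
    constructor
    · intro hW h
      have hW0 : b 0 * Ψ 0 - a 0 * Ψ 1 ≠ 0 := sub_ne_zero.mpr hW
      have h0 : c n * Φ n - b (n+1) * Φ (n+1) = 0 := by rw [h]; ring
      rw [h0, mul_zero, mul_zero] at hDn
      exact (mul_ne_zero ha0 hW0) (by linarith)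
    · intro hΦne hW
      have hW' : b 0 * Ψ 0 - a 0 * Ψ 1 = 0 := by rw [hW]; ring
      rw [hW', mul_zero, neg_zero] at hDn
      rcases mul_eq_zero.mp hDn with h | h
      · exact hP h
      · rcases mul_eq_zero.mp h with h' | h'
        · exact han h'
        · exact hΦne (by linarith [sub_eq_zero.mp h'])
  refine ⟨hreg, hreg.trans hiff2, ?_⟩
  intro hW k hk s hs
  have hW0 : b 0 * Ψ 0 - a 0 * Ψ 1 ≠ 0 := sub_ne_zero.mpr hW
  have haW : a 0 * (b 0 * Ψ 0 - a 0 * Ψ 1) ≠ 0 := mul_ne_zero ha0 hW0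
  obtain ⟨hRe, hRb1, hRb2⟩ := hR s hs
  set G : ℕ → ℝ := fun m => Φ (min m s) * Ψ (max m s) * (∏ j ∈ Finset.range s, a j / c j) /
      (a 0 * (b 0 * Ψ 0 - a 0 * Ψ 1)) with hG
  have hGe : ∀ m, 1 ≤ m → m ≤ n →
      -a m * G (m+1) + b m * G m - c (m-1) * G (m-1) = (if m = s then (1:ℝ) else 0) := by
    intro m h1 h2
    rcases lt_trichotomy m s with hms | hms | hms
    · have e1 : min (m+1) s = m+1 := by omega
      have e2 : max (m+1) s = s := by omega
      have e3 : min m s = m := by omega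
      have e4 : max m s = s := by omega
      have e5 : min (m-1) s = m-1 := by omega
      have e6 : max (m-1) s = s := by omega
      rw [if_neg (by omega)]
      simp only [hG, e1, e2, e3, e4, e5, e6]
      linear_combination ((Ψ s * (∏ j ∈ Finset.range s, a j / c j)) /
        (a 0 * (b 0 * Ψ 0 - a 0 * Ψ 1))) * hΦ m h1 h2
    · subst hms
      obtain ⟨j, rfl⟩ : ∃ j, m = j + 1 := ⟨m - 1, by omega⟩
      have e1 : min (j+1+1) (j+1) = j+1 := by omega
      have e2 : max (j+1+1) (j+1) = j+1+1 := by omega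
      have e3 : min (j+1) (j+1) = j+1 := by omega
      have e4 : max (j+1) (j+1) = j+1 := by omega
      have e5 : min (j+1-1) (j+1) = j := by omega
      have e6 : max (j+1-1) (j+1) = j+1 := by omega
      have e7 : j + 1 - 1 = j := by omega
      have e8 : j ⊓ (j+1) = j := by omega
      have e9 : j ⊔ (j+1) = j+1 := by omega
      rw [if_pos rfl]
      simp only [hG, e1, e2, e3, e4, e5, e6, e7, e8, e9]
      have eΨ := hΨ (j+1) h1 h2
      simp only [Nat.add_sub_cancel] at eΨ
      have hk2 := keyB j (by omega)
      generalize hPP : (∏ i ∈ Finset.range (j+1), a i / c i) = P at hk2 ⊢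
      generalize hDD : a 0 * (b 0 * Ψ 0 - a 0 * Ψ 1) = Dm at haW hk2 ⊢
      have comb : ∀ A B C : ℝ, -a (j+1) * (A / Dm) + b (j+1) * (B / Dm) - c j * (C / Dm) =
          (-a (j+1) * A + b (j+1) * B - c j * C) / Dm := fun A B C => by ring
      rw [comb, div_eq_one_iff_eq haW]
      linear_combination (Φ (j+1) * P) * eΨ - hk2
    · have e1 : min (m+1) s = s := by omega
      have e2 : max (m+1) s = m+1 := by omega
      have e3 : min m s = s := by omega
      have e4 : max m s = m := by omega
      have e5 : min (m-1) s = s := by omega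
      have e6 : max (m-1) s = m-1 := by omega
      rw [if_neg (by omega)]
      simp only [hG, e1, e2, e3, e4, e5, e6]
      linear_combination ((Φ s * (∏ j ∈ Finset.range s, a j / c j)) /
        (a 0 * (b 0 * Ψ 0 - a 0 * Ψ 1))) * hΨ m h1 h2
  have hGb1 : b 0 * G 0 - a 0 * G 1 = (if 0 = s then (1:ℝ) else 0) := by
    rcases Nat.eq_zero_or_pos s with rfl | hs1
    · rw [if_pos rfl]
      have e1 : min 0 0 = 0 := rfl
      have e2 : max 0 0 = 0 := rfl
      have e3 : min 1 0 = 0 := rfl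
      have e4 : max 1 0 = 1 := rfl
      simp only [hG, e1, e2, e3, e4, Finset.prod_range_zero, hΦ0]
      field_simp
    · rw [if_neg (by omega)]
      have e1 : min 0 s = 0 := by omega
      have e2 : max 0 s = s := by omega
      have e3 : min 1 s = 1 := by omega
      have e4 : max 1 s = s := by omega
      simp only [hG, e1, e2, e3, e4, hΦ0, hΦ1]
      ring
  have hGb2 : -c n * G n + b (n+1) * G (n+1) = (if n + 1 = s then (1:ℝ) else 0) := by
    rcases Nat.lt_or_ge s (n+1) with hs1 | hs1
    · rw [if_neg (by omega)]
      have e1 : min n s = s := by omega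
      have e2 : max n s = n := by omega
      have e3 : min (n+1) s = s := by omega
      have e4 : max (n+1) s = n+1 := by omega
      simp only [hG, e1, e2, e3, e4, hΨn, hΨn1]
      ring
    · have hseq : s = n + 1 := by omega
      subst hseq
      rw [if_pos rfl]
      have e1 : min n (n+1) = n := by omega
      have e2 : max n (n+1) = n+1 := by omega
      have e3 : min (n+1) (n+1) = n+1 := by omega
      have e4 : max (n+1) (n+1) = n+1 := by omega
      simp only [hG, e1, e2, e3, e4, hΨn1]
      have hk2 := keyB n le_rfl
      rw [hΨn, hΨn1] at hk2
      generalize hPP : (∏ i ∈ Finset.range (n+1), a i / c i) = P at hk2 ⊢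
      generalize hDD : a 0 * (b 0 * Ψ 0 - a 0 * Ψ 1) = Dm at haW hk2 ⊢
      have comb : ∀ A B : ℝ, -c n * (A / Dm) + b (n+1) * (B / Dm) =
          (-c n * A + b (n+1) * B) / Dm := fun A B => by ring
      rw [comb, div_eq_one_iff_eq haW]
      linear_combination -hk2
  have hzero := hreg.mpr hW (fun m => R m s - G m)
    (fun m h1 h2 => by
      linear_combination hRe m h1 h2 - hGe m h1 h2)
    (by linear_combination hRb1 - hGb1)
    (by linear_combination hRb2 - hGb2)
    k hk
  have hfin : R k s - G k = 0 := hzero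
  have : R k s = G k := by linarith
  rw [this, hG]
end

section
/- Define Φ_J(0) = 1, Φ_J(k) = b(0)P_{k−1}(b,ac) − a(0)c(0)P_{k−2}(b₁,a₁c₁) for k = 1,...,n+1, where P denotes the Chebyshev functions and the subscript 1 denotes a shift by one. Then the fundamental solution Φ satisfies Φ(k) = a(0)·(∏_{s=0}^{k−1} a(s))^{−1}·Φ_J(k) for all k = 0,...,n+1. -/
/-- With `P` the Chebyshev functions of sequences (given by `P_{-1}=0`, `P_0=1` and
`P_k(x,y) = x(k)·P_{k-1}(x,y) − y(k-1)·P_{k-2}(x,y)`), define `Φ_J(0) = 1` and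
`Φ_J(k) = b(0)·P_{k-1}(b, ac) − a(0)c(0)·P_{k-2}(b₁, a₁c₁)` for `k ≥ 1`, where the
subscript `1` denotes the shift by one. Then the fundamental solution `Φ` satisfies
`Φ(k) = a(0)·(∏_{s=0}^{k-1} a(s))⁻¹·Φ_J(k)` for all `k = 0,…,n+1`. -/
theorem phi_chebyshev_formula (n : ℕ) (hn : 1 ≤ n) (a b c : ℕ → ℝ)
    (ha : ∀ k ≤ n, a k ≠ 0) (hc : ∀ k ≤ n, c k ≠ 0)
    (Φ : ℕ → ℝ)
    (hΦ : ∀ k, 1 ≤ k → k ≤ n →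
      -a k * Φ (k + 1) + b k * Φ k - c (k - 1) * Φ (k - 1) = 0)
    (hΦ0 : Φ 0 = a 0) (hΦ1 : Φ 1 = b 0)
    (P : (ℕ → ℝ) → (ℕ → ℝ) → ℤ → ℝ)
    (hPm1 : ∀ x y, P x y (-1) = 0) (hP0 : ∀ x y, P x y 0 = 1)
    (hPrec : ∀ x y, ∀ k : ℕ, 1 ≤ k →
      P x y k = x k * P x y ((k : ℤ) - 1) - y (k - 1) * P x y ((k : ℤ) - 2)) :
    ∀ k ≤ n + 1,
      Φ k = a 0 * (∏ s ∈ Finset.range k, a s)⁻¹ *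
        (if k = 0 then 1 else
          b 0 * P b (fun j => a j * c j) ((k : ℤ) - 1) -
            a 0 * c 0 * P (fun j => b (j + 1)) (fun j => a (j + 1) * c (j + 1))
              ((k : ℤ) - 2)) := by
  set p : ℤ → ℝ := P b (fun j => a j * c j) with hp
  set q : ℤ → ℝ := P (fun j => b (j + 1)) (fun j => a (j + 1) * c (j + 1)) with hq
  have hprod : ∀ k ≤ n + 1, (∏ s ∈ Finset.range k, a s) ≠ 0 := by
    intro k hk
    exact Finset.prod_ne_zero_iff.2 fun s hs => ha s (by
      have := Finset.mem_range.1 hs; omega)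
  intro k hk
  induction k using Nat.strong_induction_on with
  | _ k ih =>
    match k, hk with
    | 0, _ => simp [hΦ0]
    | 1, _ =>
      have hq0 : q (((1:ℕ):ℤ) - 2) = 0 := by
        rw [show ((1:ℕ):ℤ) - 2 = -1 by norm_num]; exact hPm1 _ _
      have hp0 : p (((1:ℕ):ℤ) - 1) = 1 := by
        rw [show ((1:ℕ):ℤ) - 1 = 0 by norm_num]; exact hP0 _ _
      rw [hΦ1, if_neg (by omega : ¬ (1:ℕ) = 0), hq0, hp0, Finset.prod_range_one]
      field_simp [ha 0 (by omega)]
      ring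
    | (m+2), hk =>
      have hm1n : m + 1 ≤ n := by omega
      have hrec := hΦ (m+1) (by omega) hm1n
      simp only [Nat.add_sub_cancel] at hrec
      have e1 := ih (m+1) (by omega) (by omega)
      have e2 := ih m (by omega) (by omega)
      have ham1 : a (m+1) ≠ 0 := ha _ hm1n
      have ham : a m ≠ 0 := ha _ (by omega)
      have hPm : (∏ s ∈ Finset.range m, a s) ≠ 0 := hprod m (by omega)
      have hPsucc : (∏ s ∈ Finset.range (m+1), a s) = (∏ s ∈ Finset.range m, a s) * a m :=
        Finset.prod_range_succ a m
      have hPsucc2 : (∏ s ∈ Finset.range (m+2), a s)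
          = (∏ s ∈ Finset.range m, a s) * a m * a (m+1) := by
        rw [Finset.prod_range_succ, hPsucc]
      have hΦ2 : Φ (m+2) = (b (m+1) * Φ (m+1) - c m * Φ m) / a (m+1) := by
        field_simp
        linarith [hrec]
      -- recurrence for p at m+1
      have hp2 : p (((m+1:ℕ):ℤ)) = b (m+1) * p ((m:ℕ):ℤ) - a m * c m * p (((m:ℕ):ℤ) - 1) := by
        have h := hPrec b (fun j => a j * c j) (m+1) (by omega)
        rw [show ((m+1:ℕ):ℤ) - 1 = ((m:ℕ):ℤ) by push_cast; ring,
            show ((m+1:ℕ):ℤ) - 2 = ((m:ℕ):ℤ) - 1 by push_cast; ring,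
            Nat.add_sub_cancel] at h
        exact h
      rw [if_neg (by omega : ¬ m+2 = 0)] at *
      rw [show ((m+2:ℕ):ℤ) - 1 = ((m+1:ℕ):ℤ) by push_cast; ring,
          show ((m+2:ℕ):ℤ) - 2 = ((m:ℕ):ℤ) by push_cast; ring]
      rw [if_neg (by omega : ¬ m+1 = 0),
          show ((m+1:ℕ):ℤ) - 1 = ((m:ℕ):ℤ) by push_cast; ring,
          show ((m+1:ℕ):ℤ) - 2 = ((m:ℕ):ℤ) - 1 by push_cast; ring, hPsucc] at e1
      rcases Nat.eq_zero_or_pos m with hm0 | hm0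
      · subst hm0
        have hq0 : q ((0:ℕ):ℤ) = 1 := hP0 _ _
        have hqm1 : q (-1:ℤ) = 0 := hPm1 _ _
        have hpm1 : p (-1:ℤ) = 0 := hPm1 _ _
        have hp00 : p ((0:ℕ):ℤ) = 1 := hP0 _ _
        rw [show (((0:ℕ):ℤ) - 1) = (-1:ℤ) by norm_num] at e1 hp2
        rw [hΦ2, e1, hΦ0, hPsucc2, hp2, hq0, hpm1, hp00, hqm1]
        simp only [Finset.prod_range_zero]
        field_simp
        ring
      · -- recurrence for q at m (needs m ≥ 1)
        have hq2 : q ((m:ℕ):ℤ) = b (m+1) * q (((m:ℕ):ℤ) - 1) - a m * c m * q (((m:ℕ):ℤ) - 2) := by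
          have h := hPrec (fun j => b (j + 1)) (fun j => a (j + 1) * c (j + 1)) m hm0
          have h2 : m - 1 + 1 = m := by omega
          simp only [h2] at h
          exact h
        rw [if_neg (by omega : ¬ m = 0),
            show ((m:ℕ):ℤ) - 2 = (((m:ℕ):ℤ) - 1) - 1 by ring] at e2
        rw [show ((m:ℕ):ℤ) - 2 = (((m:ℕ):ℤ) - 1) - 1 by ring] at hq2
        rw [hΦ2, e1, e2, hPsucc2, hp2, hq2]
        field_simp
        ring
end

section
/- The (n+2)×(n+2) tridiagonal Toeplitz matrix J(α,β,γ) with diagonal β, superdiagonal −α, subdiagonal −γ (α, γ ≠ 0, αγ > 0) is invertible if and only if β ≠ 2√(αγ)·cos(kπ/(n+3)) for all k = 1,...,n+2, and in that case the entries of its inverse are r_{ks} = α^{s−k}(√(αγ))^{k−s−1}·U_k(q)·U_{n−s+1}(q)/U_{n+2}(q) for k ≤ s and r_{ks} = γ^{k−s}(√(αγ))^{s−k−1}·U_s(q)·U_{n−k+1}(q)/U_{n+2}(q) for s ≤ k, where q = β/(2√(αγ)) and U_m is the m-th Chebyshev polynomial of the second kind. -/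
open Polynomial Real

lemma TJ_U_mul_U (R : Type*) [CommRing R] (a b : ℤ) :
    Chebyshev.U R a * Chebyshev.U R b -
      Chebyshev.U R (a - 1) * Chebyshev.U R (b - 1) = Chebyshev.U R (a + b) := by
  induction b using Polynomial.Chebyshev.induct with
  | zero => simp [Chebyshev.U_neg_one, show (0:ℤ)-1 = -1 from rfl]
  | one =>
    rw [show (1:ℤ) - 1 = 0 from rfl]
    simp only [Chebyshev.U_one, Chebyshev.U_zero]
    linear_combination -Chebyshev.U_add_one R a
  | add_two m ih1 ih2 =>
    rw [show (m:ℤ) + 1 - 1 = m from by ring, show a + ((m:ℤ)+1) = a + m + 1 from by ring] at ih1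
    rw [show a + ((m:ℤ)+2) = a + m + 2 from by ring, show (m:ℤ)+2-1 = m+1 from by ring]
    have h1 := Chebyshev.U_add_two R (m:ℤ)
    have h2 := Chebyshev.U_add_one R (m:ℤ)
    have h3 := Chebyshev.U_add_two R (a + m)
    linear_combination (2 * (X : R[X])) * ih1 - ih2 + (Chebyshev.U R a) * h1
      - (Chebyshev.U R (a-1)) * h2 - h3
  | neg_add_one m ih1 ih2 =>
    rw [show -(m:ℤ) + 1 - 1 = -m from by ring, show a + (-(m:ℤ)+1) = a - m + 1 from by ring] at ih2
    rw [show a + -(m:ℤ) = a - m from by ring, show -(m:ℤ) - 1 = -m - 1 from by ring] at ih1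
    rw [show -(m:ℤ) - 1 - 1 = -m - 2 from by ring, show a + (-(m:ℤ) - 1) = a - m - 1 from by ring,
      show -(m:ℤ) - 1 = -m - 1 from by ring]
    have h1 := Chebyshev.U_sub_two R (-(m:ℤ)+1)
    rw [show -(m:ℤ) + 1 - 2 = -m - 1 from by ring, show -(m:ℤ) + 1 - 1 = -m from by ring] at h1
    have h2 := Chebyshev.U_sub_two R (-(m:ℤ))
    rw [show -(m:ℤ) - 2 = -m - 2 from by ring] at h2
    have h3 := Chebyshev.U_sub_two R (a - m + 1)
    rw [show a - (m:ℤ) + 1 - 2 = a - m - 1 from by ring, show a - (m:ℤ) + 1 - 1 = a - m from by ring] at h3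
    linear_combination (2 * (X : R[X])) * ih1 - ih2 + (Chebyshev.U R a) * h1
      - (Chebyshev.U R (a-1)) * h2 - h3

lemma TJ_U_deg_coeff : ∀ m : ℕ, (Chebyshev.U ℝ (m:ℤ)).natDegree ≤ m ∧
    (Chebyshev.U ℝ (m:ℤ)).coeff m = 2 ^ m := by
  intro m
  induction m using Nat.twoStepInduction with
  | zero => simp [Chebyshev.U_zero]
  | one =>
    constructor
    · simp only [Nat.cast_one, Chebyshev.U_one]
      exact le_trans (natDegree_mul_le) (by simp)
    · simp [Chebyshev.U_one, coeff_X, Polynomial.coeff_ofNat_mul]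
  | more m ih1 ih2 =>
    have hU : Chebyshev.U ℝ ((m:ℤ)+2) = 2 * X * Chebyshev.U ℝ ((m:ℤ)+1) - Chebyshev.U ℝ (m:ℤ) :=
      Chebyshev.U_add_two ℝ m
    have hc : ((m+2 : ℕ) : ℤ) = (m:ℤ) + 2 := by push_cast; ring
    have hc1 : ((m+1 : ℕ) : ℤ) = (m:ℤ) + 1 := by push_cast; ring
    rw [hc, hU]
    constructor
    · refine le_trans (natDegree_sub_le _ _) ?_
      simp only [max_le_iff]
      constructor
      · refine le_trans (natDegree_mul_le) ?_
        have : (2 * X : ℝ[X]).natDegree ≤ 1 := le_trans natDegree_mul_le (by simp)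
        have h2 := ih2.1; rw [hc1] at h2; omega
      · exact le_trans ih1.1 (by omega)
    · have h1 : (Chebyshev.U ℝ ((m:ℤ)+1)).coeff (m+1) = 2 ^ (m+1) := by rw [← hc1]; exact ih2.2
      have h2 : (Chebyshev.U ℝ ((m:ℤ))).coeff (m+2) = 0 := by
        apply coeff_eq_zero_of_natDegree_lt; omega
      rw [coeff_sub, h2, sub_zero, show (2 * X * Chebyshev.U ℝ ((m:ℤ)+1)) = 2 * (X * Chebyshev.U ℝ ((m:ℤ)+1)) from by ring]
      rw [coeff_ofNat_mul, show m + 2 = (m+1) + 1 from rfl, coeff_X_mul, h1]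
      ring

lemma TJ_U_cos_root (m : ℕ) (k : ℕ) (hk1 : 1 ≤ k) (hk2 : k ≤ m + 1) :
    (Chebyshev.U ℝ ((m:ℤ)+1)).eval (Real.cos (k * Real.pi / (m+2))) = 0 := by
  set θ : ℝ := k * Real.pi / (m+2) with hθ
  have hm2 : (0:ℝ) < (m:ℝ) + 2 := by positivity
  have hθpos : 0 < θ := by
    apply div_pos _ hm2
    have : (0:ℝ) < (k:ℝ) := by exact_mod_cast hk1
    positivity
  have hθlt : θ < Real.pi := by
    rw [hθ, div_lt_iff₀ hm2]
    have hk : (k:ℝ) < (m:ℝ) + 2 := by exact_mod_cast Nat.lt_of_le_of_lt hk2 (by omega)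
    nlinarith [Real.pi_pos]
  have hsin : Real.sin θ ≠ 0 := ne_of_gt (Real.sin_pos_of_pos_of_lt_pi hθpos hθlt)
  have h := Polynomial.Chebyshev.U_real_cos θ ((m:ℤ)+1)
  push_cast at h
  have hm2' : ((m:ℝ) + 2) ≠ 0 := ne_of_gt hm2
  rw [show ((m:ℝ)+1+1) * θ = k * Real.pi from by rw [hθ]; field_simp; ring,
    Real.sin_nat_mul_pi] at h
  rcases mul_eq_zero.mp h with h' | h'
  · exact h'
  · exact absurd h' hsin

lemma TJ_U_root_classify (m : ℕ) (x : ℝ) (hx : (Chebyshev.U ℝ ((m:ℤ)+1)).eval x = 0) :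
    ∃ k : ℕ, 1 ≤ k ∧ k ≤ m + 1 ∧ x = Real.cos (k * Real.pi / (m+2)) := by
  set p := Chebyshev.U ℝ ((m:ℤ)+1) with hp
  have hcast : ((m+1:ℕ):ℤ) = (m:ℤ)+1 := by push_cast; ring
  have hco := (TJ_U_deg_coeff (m+1)).2
  have hdeg := (TJ_U_deg_coeff (m+1)).1
  rw [hcast] at hco hdeg
  have hpne : p ≠ 0 := by
    intro h
    rw [← hp, h] at hco
    simp at hco
    exact absurd hco (by positivity)
  set f : ℕ → ℝ := fun k => Real.cos (k * Real.pi / (m+2)) with hf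
  have hmem : ∀ k ∈ Finset.Icc 1 (m+1), f k ∈ p.roots.toFinset := by
    intro k hk
    rw [Finset.mem_Icc] at hk
    rw [Multiset.mem_toFinset, Polynomial.mem_roots hpne]
    exact TJ_U_cos_root m k hk.1 hk.2
  have hinj : Set.InjOn f (Finset.Icc 1 (m+1) : Finset ℕ) := by
    intro a ha b hb hab
    rw [Finset.coe_Icc, Set.mem_Icc] at ha hb
    have hm2 : (0:ℝ) < (m:ℝ) + 2 := by positivity
    have hbound : ∀ c : ℕ, 1 ≤ c → c ≤ m+1 → (c:ℝ) * Real.pi / (m+2) ∈ Set.Icc 0 Real.pi := by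
      intro c h1 h2
      constructor
      · positivity
      · rw [div_le_iff₀ hm2]
        have hc : (c:ℝ) ≤ (m:ℝ) + 2 := by exact_mod_cast Nat.le_of_lt (by omega)
        nlinarith [Real.pi_pos]
    have h2 := Real.injOn_cos (hbound a ha.1 ha.2) (hbound b hb.1 hb.2) hab
    have hπ := Real.pi_pos
    have h3 : (a:ℝ) = b := by
      rw [div_left_inj' (ne_of_gt hm2), mul_left_inj' (ne_of_gt hπ)] at h2
      exact h2
    exact_mod_cast h3
  have hTcard : ((Finset.Icc 1 (m+1)).image f).card = m + 1 := by
    rw [Finset.card_image_of_injOn hinj, Nat.card_Icc]; omega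
  have hsub : (Finset.Icc 1 (m+1)).image f ⊆ p.roots.toFinset :=
    Finset.image_subset_iff.mpr hmem
  have hcard : p.roots.toFinset.card ≤ m + 1 :=
    le_trans (Multiset.toFinset_card_le _) (le_trans (Polynomial.card_roots' p) hdeg)
  have hTeq : (Finset.Icc 1 (m+1)).image f = p.roots.toFinset :=
    Finset.eq_of_subset_of_card_le hsub (by omega)
  have hxmem : x ∈ p.roots.toFinset := by
    rw [Multiset.mem_toFinset, Polynomial.mem_roots hpne]; exact hx
  rw [← hTeq, Finset.mem_image] at hxmem
  obtain ⟨k, hk, hkx⟩ := hxmem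
  rw [Finset.mem_Icc] at hk
  exact ⟨k, hk.1, hk.2, hkx.symm⟩

/-- The `(n+2)×(n+2)` tridiagonal Toeplitz matrix with diagonal `β`, superdiagonal `−α`
and subdiagonal `−γ` (with `αγ > 0`) is invertible iff
`β ≠ 2√(αγ)·cos(kπ/(n+3))` for `k = 1,…,n+2`, and in that case the entries of its
inverse are given explicitly via Chebyshev polynomials of the second kind evaluated at
`q = β/(2√(αγ))`. -/
theorem toeplitz_jacobi_inverse (n : ℕ) (α β γ : ℝ)
    (hα : α ≠ 0) (hγ : γ ≠ 0) (hαγ : 0 < α * γ)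
    (J : Matrix (Fin (n + 2)) (Fin (n + 2)) ℝ)
    (hJ : ∀ i j : Fin (n + 2), J i j =
      if (i : ℕ) = j then β
      else if (i : ℕ) + 1 = j then -α
      else if (j : ℕ) + 1 = i then -γ
      else 0) :
    (IsUnit J ↔ ∀ k : ℕ, 1 ≤ k → k ≤ n + 2 →
      β ≠ 2 * Real.sqrt (α * γ) * Real.cos (k * Real.pi / (n + 3))) ∧
    (IsUnit J →
      ∀ k s : Fin (n + 2),
        J⁻¹ k s =
          if (k : ℕ) ≤ s then
            α ^ ((s : ℕ) - (k : ℕ)) * Real.sqrt (α * γ) ^ ((k : ℤ) - (s : ℤ) - 1) *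
              (Polynomial.Chebyshev.U ℝ (k : ℕ)).eval (β / (2 * Real.sqrt (α * γ))) *
              (Polynomial.Chebyshev.U ℝ ((n : ℤ) - (s : ℕ) + 1)).eval
                (β / (2 * Real.sqrt (α * γ))) /
              (Polynomial.Chebyshev.U ℝ ((n : ℤ) + 2)).eval (β / (2 * Real.sqrt (α * γ)))
          else
            γ ^ ((k : ℕ) - (s : ℕ)) * Real.sqrt (α * γ) ^ ((s : ℤ) - (k : ℤ) - 1) *
              (Polynomial.Chebyshev.U ℝ (s : ℕ)).eval (β / (2 * Real.sqrt (α * γ))) *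
              (Polynomial.Chebyshev.U ℝ ((n : ℤ) - (k : ℕ) + 1)).eval
                (β / (2 * Real.sqrt (α * γ))) /
              (Polynomial.Chebyshev.U ℝ ((n : ℤ) + 2)).eval
                (β / (2 * Real.sqrt (α * γ)))) := by
  have hS : 0 < Real.sqrt (α * γ) := Real.sqrt_pos.mpr hαγ
  set S := Real.sqrt (α * γ) with hSdef
  have hSne : S ≠ 0 := ne_of_gt hS
  have hS2 : S * S = α * γ := Real.mul_self_sqrt hαγ.le
  set q := β / (2 * S) with hqdef
  have hβ : β = 2 * S * q := by rw [hqdef]; field_simp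
  set u : ℤ → ℝ := fun m => (Polynomial.Chebyshev.U ℝ m).eval q with hu
  have hum1 : u (-1) = 0 := by rw [hu]; simp [Chebyshev.U_neg_one]
  have hu0 : u 0 = 1 := by rw [hu]; simp
  have urec : ∀ m : ℤ, u (m+1) = 2 * q * u m - u (m-1) := by
    intro m
    simp only [hu, Polynomial.Chebyshev.U_add_one ℝ m]
    simp
  have uprod : ∀ a b : ℤ, u a * u b - u (a-1) * u (b-1) = u (a+b) := by
    intro a b
    simp only [hu]
    rw [← eval_mul, ← eval_mul, ← eval_sub, TJ_U_mul_U]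
  set D := (Polynomial.Chebyshev.U ℝ ((n:ℤ) + 2)).eval q with hD
  have huD : u ((n:ℤ)+2) = D := by rw [hu]
  -- row sum lemma
  have hrow : ∀ (g : ℤ → ℝ), g (-1) = 0 → g ((n:ℤ)+2) = 0 → ∀ i : Fin (n+2),
      (∑ k : Fin (n+2), J i k * g (k:ℤ))
        = β * g (i:ℤ) - α * g ((i:ℤ)+1) - γ * g ((i:ℤ)-1) := by
    intro g hg1 hg2 i
    have hsplit : ∀ k : Fin (n+2), J i k * g (k:ℤ) =
        β * (if i = k then g (k:ℤ) else 0)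
        - α * (if (i:ℕ)+1 = (k:ℕ) then g (k:ℤ) else 0)
        - γ * (if ((k:ℕ)+1 : ℕ) = (i:ℕ) then g (k:ℤ) else 0) := by
      intro k
      rw [hJ]
      simp only [Fin.ext_iff]
      split_ifs <;> first | (exfalso; omega) | ring
    rw [Finset.sum_congr rfl fun k _ => hsplit k]
    rw [Finset.sum_sub_distrib, Finset.sum_sub_distrib,
      ← Finset.mul_sum, ← Finset.mul_sum, ← Finset.mul_sum]
    have e1 : (∑ k : Fin (n+2), if i = k then g (k:ℤ) else 0) = g (i:ℤ) := by
      rw [Finset.sum_ite_eq]; simp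
    have e2 : (∑ k : Fin (n+2), if (i:ℕ)+1 = (k:ℕ) then g (k:ℤ) else 0) = g ((i:ℤ)+1) := by
      by_cases h : (i:ℕ)+1 < n+2
      · have : ∀ k : Fin (n+2), (if (i:ℕ)+1 = (k:ℕ) then g (k:ℤ) else 0)
            = (if (⟨(i:ℕ)+1, h⟩ : Fin (n+2)) = k then g (k:ℤ) else 0) := by
          intro k
          refine if_congr ?_ rfl rfl
          rw [Fin.ext_iff]
        rw [Finset.sum_congr rfl fun k _ => this k, Finset.sum_ite_eq,
          if_pos (Finset.mem_univ _)]
        congr 1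
      · have hi : (i:ℕ) = n+1 := by omega
        have : ∀ k : Fin (n+2), (if (i:ℕ)+1 = (k:ℕ) then g (k:ℤ) else 0) = 0 := by
          intro k
          rw [if_neg]
          omega
        rw [Finset.sum_congr rfl fun k _ => this k, Finset.sum_const_zero]
        rw [show ((i:ℕ):ℤ)+1 = ((n:ℤ)+2) from by omega, hg2]
    have e3 : (∑ k : Fin (n+2), if ((k:ℕ)+1 : ℕ) = (i:ℕ) then g (k:ℤ) else 0) = g ((i:ℤ)-1) := by
      by_cases h : 0 < (i:ℕ)
      · have hlt : (i:ℕ) - 1 < n + 2 := by omega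
        have : ∀ k : Fin (n+2), (if ((k:ℕ)+1 : ℕ) = (i:ℕ) then g (k:ℤ) else 0)
            = (if (⟨(i:ℕ)-1, hlt⟩ : Fin (n+2)) = k then g (k:ℤ) else 0) := by
          intro k
          refine if_congr ?_ rfl rfl
          rw [Fin.ext_iff]
          simp only [Fin.val_mk]
          constructor <;> intro hh <;> omega
        rw [Finset.sum_congr rfl fun k _ => this k, Finset.sum_ite_eq,
          if_pos (Finset.mem_univ _)]
        congr 1
        simp only [Fin.val_mk]
        omega
      · have hi : (i:ℕ) = 0 := by omega
        have : ∀ k : Fin (n+2), (if ((k:ℕ)+1 : ℕ) = (i:ℕ) then g (k:ℤ) else 0) = 0 := by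
          intro k; rw [if_neg]; omega
        rw [Finset.sum_congr rfl fun k _ => this k, Finset.sum_const_zero]
        rw [show ((i:ℕ):ℤ)-1 = (-1 : ℤ) from by omega, hg1]
    rw [e1, e2, e3]
  -- candidate inverse entries
  set F : ℤ → ℤ → ℝ := fun k s =>
    if k ≤ s then α ^ (s - k) * S ^ (k - s - 1) * u k * u ((n:ℤ) - s + 1) / D
    else γ ^ (k - s) * S ^ (s - k - 1) * u s * u ((n:ℤ) - k + 1) / D with hF
  clear_value S q u D F
  -- kernel vector when D = 0
  have hkernel : D = 0 → ¬ IsUnit J := by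
    intro hD0 hUnit
    set c : ℝ := S / α with hc
    have hcne : c ≠ 0 := div_ne_zero hSne hα
    set w : ℤ → ℝ := fun m => c ^ m * u m with hw
    set v : Fin (n+2) → ℝ := fun i => w (i:ℤ) with hv
    have hw1 : w (-1) = 0 := by rw [hw]; simp [hum1]
    have hw2 : w ((n:ℤ)+2) = 0 := by
      rw [hw]; simp only []; rw [huD, hD0, mul_zero]
    have hwrec : ∀ m : ℤ, β * w m - α * w (m+1) - γ * w (m-1) = 0 := by
      intro m
      have h1 : c ^ (m+1) = c ^ m * c := zpow_add_one₀ hcne m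
      have h2 : c ^ (m-1) = c ^ m * c⁻¹ := zpow_sub_one₀ hcne m
      have h3 := urec m
      have hαc : α * c = S := by rw [hc]; field_simp
      have hγc : γ = S * c := by
        rw [hc]; field_simp; linear_combination -hS2
      have hcc : c * c⁻¹ = 1 := mul_inv_cancel₀ hcne
      rw [hw]; simp only []
      rw [h1, h2, h3, hβ]
      linear_combination (-(c^m) * (2*q*u m - u (m-1))) * hαc
        + (-(c^m) * c⁻¹ * u (m-1)) * hγc + (-(S * c^m * u (m-1))) * hcc
    have hveq : J.mulVec v = 0 := by
      funext i
      simp only [Matrix.mulVec, dotProduct, Pi.zero_apply, hv]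
      rw [hrow w hw1 hw2 i]
      linear_combination hwrec ((i:ℤ))
    have hdet := (Matrix.isUnit_iff_isUnit_det J).mp hUnit
    have hJ1 : J⁻¹ * J = 1 := Matrix.nonsing_inv_mul J hdet
    have hv0 : v = 0 := by
      calc v = (J⁻¹ * J).mulVec v := by rw [hJ1, Matrix.one_mulVec]
      _ = J⁻¹.mulVec (J.mulVec v) := by rw [← Matrix.mulVec_mulVec]
      _ = 0 := by rw [hveq, Matrix.mulVec_zero]
    have h1 : v 0 = 1 := by
      rw [hv]; simp only []
      rw [show (((0 : Fin (n+2)) : ℕ) : ℤ) = 0 from by simp, hw]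
      simp [hu0]
    rw [hv0] at h1
    simp at h1
  -- correspondence between D and the cosine conditions
  have hq_of : ∀ θ : ℝ, β = 2 * S * Real.cos θ → q = Real.cos θ := by
    intro θ h; rw [hqdef, h]; field_simp
  have hcos_to_D : ∀ k : ℕ, 1 ≤ k → k ≤ n+2 →
      β = 2 * S * Real.cos (k * Real.pi / ((n:ℝ)+3)) → D = 0 := by
    intro k h1 h2 hb
    have hqc := hq_of _ hb
    have h := TJ_U_cos_root (n+1) k h1 (by omega)
    rw [show (((n+1:ℕ)):ℤ)+1 = (n:ℤ)+2 from by push_cast; ring,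
        show (((n+1:ℕ)):ℝ)+2 = (n:ℝ)+3 from by push_cast; ring] at h
    rw [hD, hqc]
    exact h
  have hD_to_cos : D = 0 →
      ∃ k : ℕ, 1 ≤ k ∧ k ≤ n+2 ∧ β = 2 * S * Real.cos (k * Real.pi / ((n:ℝ)+3)) := by
    intro h
    have h' : (Chebyshev.U ℝ (((n+1:ℕ):ℤ)+1)).eval q = 0 := by
      rw [show (((n+1:ℕ)):ℤ)+1 = (n:ℤ)+2 from by push_cast; ring]
      rw [hD] at h
      exact h
    obtain ⟨k, h1, h2, h3⟩ := TJ_U_root_classify (n+1) q h'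
    refine ⟨k, h1, by omega, ?_⟩
    rw [show (((n+1:ℕ)):ℝ)+2 = (n:ℝ)+3 from by push_cast; ring] at h3
    rw [hβ, h3]
  -- uniform branch formulas for F
  have hFhigh : ∀ k s : ℤ, k ≤ s →
      F k s = α ^ (s-k) * S ^ (k-s-1) * u k * u ((n:ℤ)-s+1) / D := by
    intro k s h; rw [hF]; simp only []; rw [if_pos h]
  have hFlow : ∀ k s : ℤ, s ≤ k →
      F k s = γ ^ (k-s) * S ^ (s-k-1) * u s * u ((n:ℤ)-k+1) / D := by
    intro k s h
    rcases lt_or_eq_of_le h with h' | h'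
    · rw [hF]; simp only []; rw [if_neg (by omega)]
    · subst h'
      rw [hF]; simp only []; rw [if_pos le_rfl, sub_self, zpow_zero, zpow_zero]
  have hSS : S * S⁻¹ = 1 := mul_inv_cancel₀ hSne
  have hαα : α * α⁻¹ = 1 := mul_inv_cancel₀ hα
  have hγγ : γ * γ⁻¹ = 1 := mul_inv_cancel₀ hγ
  -- the key entrywise identity
  have hentry : D ≠ 0 → ∀ i j : ℤ, 0 ≤ i → i ≤ (n:ℤ)+1 → 0 ≤ j → j ≤ (n:ℤ)+1 →
      β * F i j - α * F (i+1) j - γ * F (i-1) j = if i = j then 1 else 0 := by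
    intro hD0 i j hi0 hi1 hj0 hj1
    have hDD : D * D⁻¹ = 1 := mul_inv_cancel₀ hD0
    rcases lt_trichotomy i j with hij | hij | hij
    · rw [if_neg (by omega)]
      rw [hFhigh i j (by omega), hFhigh (i+1) j (by omega), hFhigh (i-1) j (by omega)]
      have e1 : α ^ (j-(i+1)) = α ^ (j-i) * α⁻¹ := by
        rw [show j-(i+1) = (j-i)-1 from by ring]; exact zpow_sub_one₀ hα _
      have e2 : S ^ (i+1-j-1) = S ^ (i-j-1) * S := by
        rw [show i+1-j-1 = (i-j-1)+1 from by ring]; exact zpow_add_one₀ hSne _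
      have e3 : α ^ (j-(i-1)) = α ^ (j-i) * α := by
        rw [show j-(i-1) = (j-i)+1 from by ring]; exact zpow_add_one₀ hα _
      have e4 : S ^ (i-1-j-1) = S ^ (i-j-1) * S⁻¹ := by
        rw [show i-1-j-1 = (i-j-1)-1 from by ring]; exact zpow_sub_one₀ hSne _
      rw [e1, e2, e3, e4, urec i, hβ]
      linear_combination
        (-(α^(j-i) * S^(i-j-1) * S * (2*q*u i - u (i-1))) * u ((n:ℤ)-j+1) / D) * hαα
        + (α^(j-i) * S^(i-j-1) * u (i-1) * S⁻¹ * u ((n:ℤ)-j+1) / D) * hS2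
        + (-(α^(j-i) * S^(i-j-1) * u (i-1) * S) * u ((n:ℤ)-j+1) / D) * hSS
    · subst hij
      rw [if_pos rfl]
      rw [hFhigh i i le_rfl, hFlow (i+1) i (by omega), hFhigh (i-1) i (by omega)]
      have d1 : α ^ (i-i) = 1 := by rw [sub_self, zpow_zero]
      have d2 : S ^ (i-i-1) = S⁻¹ := by
        rw [show i-i-1 = (-1:ℤ) from by ring, zpow_neg_one]
      have d3 : γ ^ (i+1-i) = γ := by rw [show i+1-i = (1:ℤ) from by ring, zpow_one]
      have d4 : S ^ (i-(i+1)-1) = S⁻¹*S⁻¹ := by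
        rw [show i-(i+1)-1 = (-1:ℤ)+(-1:ℤ) from by ring, zpow_add₀ hSne, zpow_neg_one]
      have d5 : α ^ (i-(i-1)) = α := by rw [show i-(i-1) = (1:ℤ) from by ring, zpow_one]
      have d6 : S ^ (i-1-i-1) = S⁻¹*S⁻¹ := by
        rw [show i-1-i-1 = (-1:ℤ)+(-1:ℤ) from by ring, zpow_add₀ hSne, zpow_neg_one]
      have d7 : u ((n:ℤ)-(i+1)+1) = u ((n:ℤ)-i) := by
        rw [show (n:ℤ)-(i+1)+1 = (n:ℤ)-i from by ring]
      rw [d1, d2, d3, d4, d5, d6, d7, hβ]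
      have hprod := uprod i ((n:ℤ)-i+2)
      rw [show (n:ℤ)-i+2-1 = (n:ℤ)-i+1 from by ring,
        show i + ((n:ℤ)-i+2) = (n:ℤ)+2 from by ring, huD] at hprod
      have hrec := urec ((n:ℤ)-i+1)
      rw [show (n:ℤ)-i+1+1 = (n:ℤ)-i+2 from by ring,
        show (n:ℤ)-i+1-1 = (n:ℤ)-i from by ring] at hrec
      linear_combination
        (S⁻¹*S⁻¹*(u i * u ((n:ℤ)-i) + u (i-1) * u ((n:ℤ)-i+1))/D) * hS2
        + ((2*q*u i*u ((n:ℤ)-i+1)/D) - ((u i * u ((n:ℤ)-i) + u (i-1) * u ((n:ℤ)-i+1))/D)*(S*S⁻¹+1)) * hSS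
        + (1/D) * hprod + (-(u i)/D) * hrec + hDD
    · rw [if_neg (by omega)]
      rw [hFlow i j (by omega), hFlow (i+1) j (by omega), hFlow (i-1) j (by omega)]
      have f1 : γ ^ (i+1-j) = γ ^ (i-j) * γ := by
        rw [show i+1-j = (i-j)+1 from by ring]; exact zpow_add_one₀ hγ _
      have f2 : S ^ (j-(i+1)-1) = S ^ (j-i-1) * S⁻¹ := by
        rw [show j-(i+1)-1 = (j-i-1)-1 from by ring]; exact zpow_sub_one₀ hSne _
      have f3 : γ ^ (i-1-j) = γ ^ (i-j) * γ⁻¹ := by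
        rw [show i-1-j = (i-j)-1 from by ring]; exact zpow_sub_one₀ hγ _
      have f4 : S ^ (j-(i-1)-1) = S ^ (j-i-1) * S := by
        rw [show j-(i-1)-1 = (j-i-1)+1 from by ring]; exact zpow_add_one₀ hSne _
      have f5 : u ((n:ℤ)-(i+1)+1) = u ((n:ℤ)-i) := by
        rw [show (n:ℤ)-(i+1)+1 = (n:ℤ)-i from by ring]
      have f6 : u ((n:ℤ)-(i-1)+1) = 2*q*u ((n:ℤ)-i+1) - u ((n:ℤ)-i) := by
        rw [show (n:ℤ)-(i-1)+1 = (n:ℤ)-i+1+1 from by ring, urec,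
          show (n:ℤ)-i+1-1 = (n:ℤ)-i from by ring]
      rw [f1, f2, f3, f4, f5, f6, hβ]
      linear_combination
        (-(γ^(i-j) * S^(j-i-1) * S * (2*q*u ((n:ℤ)-i+1) - u ((n:ℤ)-i))) * u j / D) * hγγ
        + (γ^(i-j) * S^(j-i-1) * u ((n:ℤ)-i) * S⁻¹ * u j / D) * hS2
        + (-(γ^(i-j) * S^(j-i-1) * u ((n:ℤ)-i) * S) * u j / D) * hSS
  -- boundary rows of F vanish
  have hFm1 : ∀ j : Fin (n+2), F (-1) ((j:ℕ):ℤ) = 0 := by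
    intro j
    rw [hFhigh (-1) ((j:ℕ):ℤ) (by omega), hum1]
    ring
  have hFn2 : ∀ j : Fin (n+2), F ((n:ℤ)+2) ((j:ℕ):ℤ) = 0 := by
    intro j
    rw [hFlow ((n:ℤ)+2) ((j:ℕ):ℤ) (by have := j.isLt; omega),
      show (n:ℤ) - ((n:ℤ)+2) + 1 = -1 from by ring, hum1]
    ring
  set R : Matrix (Fin (n+2)) (Fin (n+2)) ℝ :=
    Matrix.of (fun k s : Fin (n+2) => F ((k:ℕ):ℤ) ((s:ℕ):ℤ)) with hR
  have hJR : D ≠ 0 → J * R = 1 := by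
    intro hD0
    ext i j
    rw [Matrix.mul_apply]
    have h0 := hrow (fun k => F k ((j:ℕ):ℤ)) (hFm1 j) (hFn2 j) i
    simp only [hR, Matrix.of_apply]
    rw [h0, hentry hD0 _ _ (by omega) (by have := i.isLt; omega)
      (by omega) (by have := j.isLt; omega), Matrix.one_apply]
    by_cases h : i = j
    · rw [if_pos (by rw [h]), if_pos h]
    · rw [if_neg (by intro hc; exact h (Fin.ext (by omega))), if_neg h]
  have hIsUnit : D ≠ 0 → IsUnit J := by
    intro hD0
    have h1 := hJR hD0
    have h2 : R * J = 1 := mul_eq_one_comm.mp h1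
    exact ⟨⟨J, R, h1, h2⟩, rfl⟩
  constructor
  · constructor
    · intro hUnit k hk1 hk2 hcon
      exact hkernel (hcos_to_D k hk1 hk2 hcon) hUnit
    · intro hall
      refine hIsUnit ?_
      intro h
      obtain ⟨k, h1, h2, h3⟩ := hD_to_cos h
      exact hall k h1 h2 h3
  · intro hUnit k s
    have hD0 : D ≠ 0 := fun h => hkernel h hUnit
    have hinv : J⁻¹ = R := Matrix.inv_eq_right_inv (hJR hD0)
    rw [hinv]
    simp only [hR, Matrix.of_apply]
    by_cases hks : (k:ℕ) ≤ (s:ℕ)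
    · rw [if_pos hks, hFhigh ((k:ℕ):ℤ) ((s:ℕ):ℤ) (by omega)]
      rw [show α ^ (((s:ℕ):ℤ) - ((k:ℕ):ℤ)) = α ^ (((s:ℕ) - (k:ℕ)) : ℕ) from by
        rw [← zpow_natCast]; congr 1; omega]
      rw [hu]
    · rw [if_neg hks, hFlow ((k:ℕ):ℤ) ((s:ℕ):ℤ) (by omega)]
      rw [show γ ^ (((k:ℕ):ℤ) - ((s:ℕ):ℤ)) = γ ^ (((k:ℕ) - (s:ℕ)) : ℕ) from by
        rw [← zpow_natCast]; congr 1; omega]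
      rw [hu]
end

section
/- The symmetric tridiagonal Toeplitz matrix J(α,β) of size n+2 with diagonal β and off-diagonals −α (α ≠ 0) is invertible if and only if β ≠ 2α·cos(kπ/(n+3)) for all k = 1,...,n+2; in that case the entries of its inverse R are r_{ks} = U_{min{k,s}}(β/(2α))·U_{n−max{k,s}+1}(β/(2α)) / (α·U_{n+2}(β/(2α))) for k, s = 0,...,n+1, and det(R) = 1/(α^{n+2}·U_{n+2}(β/(2α))). -/
open Polynomial

private lemma succAbove_one_coe (m:ℕ) (i : Fin (m+1)) :
    (((1 : Fin (m+2)).succAbove i : Fin (m+2)) : ℕ) = if (i:ℕ) = 0 then 0 else (i:ℕ)+1 := by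
  rcases eq_or_ne (i:ℕ) 0 with h | h
  · rw [Fin.succAbove_of_castSucc_lt]
    · simp [h]
    · simp [Fin.lt_def, h]
  · rw [Fin.succAbove_of_le_castSucc]
    · simp [h]
    · simp [Fin.le_def]; omega

private lemma det_jacobi (α β x : ℝ) (hβ : β = 2*α*x) : ∀ (m : ℕ)
    (A : Matrix (Fin m) (Fin m) ℝ),
    (∀ i j : Fin m, A i j = if (i:ℕ) = (j:ℕ) then β else if (i:ℕ)+1 = (j:ℕ) then -α
      else if (j:ℕ)+1 = (i:ℕ) then -α else 0) →
    A.det = α^m * (Chebyshev.U ℝ (m:ℤ)).eval x := by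
  intro m
  induction m using Nat.strong_induction_on with
  | _ m IH =>
  match m with
  | 0 => intro A hA; simp [Matrix.det_fin_zero, Chebyshev.U_zero]
  | 1 => intro A hA; simp [Matrix.det_fin_one, hA, Chebyshev.U_one, hβ]; ring
  | (m+2) =>
    intro A hA
    rw [Matrix.det_succ_row_zero]
    have h01 : (0 : Fin (m+2)) ≠ 1 := by simp [Fin.ext_iff]
    rw [Finset.sum_eq_add (0 : Fin (m+2)) (1 : Fin (m+2)) h01 ?_ (by simp) (by simp)]
    · -- main terms
      have hM0 : (A.submatrix Fin.succ (Fin.succAbove 0)).det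
          = α^(m+1) * (Chebyshev.U ℝ ((m:ℤ)+1)).eval x := by
        rw [Fin.succAbove_zero]
        have := IH (m+1) (by omega) (A.submatrix Fin.succ Fin.succ) ?_
        · rw [this]; push_cast; ring_nf
        · intro i j
          simp only [Matrix.submatrix_apply, hA, Fin.val_succ, Fin.val_zero, Fin.val_one]
          split_ifs <;> first | rfl | omega
      have hM1 : (A.submatrix Fin.succ (Fin.succAbove 1)).det
          = (-α) * (α^m * (Chebyshev.U ℝ (m:ℤ)).eval x) := by
        set B := A.submatrix Fin.succ (Fin.succAbove 1) with hB
        rw [Matrix.det_succ_column_zero]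
        rw [Finset.sum_eq_single (0 : Fin (m+1)) ?_ (by simp)]
        · have hB00 : B 0 0 = -α := by
            simp only [hB, Matrix.submatrix_apply, hA]
            rw [succAbove_one_coe]
            norm_num
          have hC : (B.submatrix (Fin.succAbove 0) Fin.succ).det
              = α^m * (Chebyshev.U ℝ (m:ℤ)).eval x := by
            rw [Fin.succAbove_zero]
            apply IH m (by omega)
            intro i j
            simp only [hB, Matrix.submatrix_apply, hA, Fin.val_succ, Fin.val_zero, Fin.val_one]
            rw [succAbove_one_coe]
            simp only [Fin.val_succ, Fin.val_zero, Fin.val_one]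
            split_ifs <;> first | rfl | omega | exact ‹False›.elim
          rw [hB00, hC]; simp
        · intro b _ hb
          have hBb0 : B b 0 = 0 := by
            simp only [hB, Matrix.submatrix_apply, hA]
            rw [succAbove_one_coe]
            have : (b:ℕ) ≠ 0 := fun h => hb (Fin.ext h)
            simp only [Fin.val_succ, Fin.val_zero, Fin.val_one, if_pos rfl]
            split_ifs <;> first | rfl | omega | exact ‹False›.elim
          rw [hBb0]; ring
      have hA00 : A 0 0 = β := by simp [hA]
      have hA01 : A 0 1 = -α := by simp [hA]
      rw [hA00, hA01, hM0, hM1]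
      have hrec : (Chebyshev.U ℝ ((m:ℤ)+2)).eval x
          = 2*x*(Chebyshev.U ℝ ((m:ℤ)+1)).eval x - (Chebyshev.U ℝ (m:ℤ)).eval x := by
        simp [Chebyshev.U_add_two]; try ring
      push_cast
      rw [hrec, hβ]
      simp only [Fin.val_zero, Fin.val_one, pow_zero, pow_one, one_mul]
      ring
    · intro c _ hc
      have : A 0 c = 0 := by
        rw [hA]
        have h1 : (c:ℕ) ≠ 0 := fun h => hc.1 (Fin.ext h)
        have h2 : (c:ℕ) ≠ 1 := by
          intro h; exact hc.2 (Fin.ext (by simp [h, Fin.val_one]))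
        simp only [Fin.val_zero]
        split_ifs <;> first | rfl | omega | exact ‹False›.elim
      rw [this]; ring


private lemma U_eval_rec (x : ℝ) (m : ℤ) : (Chebyshev.U ℝ (m+2)).eval x
    = 2*x*(Chebyshev.U ℝ (m+1)).eval x - (Chebyshev.U ℝ m).eval x := by
  simp [Chebyshev.U_add_two]

private lemma U_eval_one (m : ℕ) : (Chebyshev.U ℝ (m:ℤ)).eval 1 = m+1 := by
  induction m using Nat.strong_induction_on with
  | _ m IH =>
    match m with
    | 0 => simp [Chebyshev.U_zero]
    | 1 => simp [Chebyshev.U_one]; norm_num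
    | (m+2) =>
      have h1 := IH m (by omega)
      have h2 := IH (m+1) (by omega)
      push_cast
      push_cast at h1 h2
      rw [U_eval_rec, h1, h2]
      ring

private lemma U_eval_neg_one (m : ℕ) : (Chebyshev.U ℝ (m:ℤ)).eval (-1) = (-1)^m * (m+1) := by
  induction m using Nat.strong_induction_on with
  | _ m IH =>
    match m with
    | 0 => simp [Chebyshev.U_zero]
    | 1 => simp [Chebyshev.U_one]; norm_num
    | (m+2) =>
      have h1 := IH m (by omega)
      have h2 := IH (m+1) (by omega)
      push_cast
      push_cast at h1 h2
      rw [U_eval_rec, h1, h2]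
      ring

private lemma U_pos_of_one_lt {x : ℝ} (hx : 1 < x) (m : ℕ) :
    1 ≤ (Chebyshev.U ℝ (m:ℤ)).eval x ∧
      (Chebyshev.U ℝ (m:ℤ)).eval x ≤ (Chebyshev.U ℝ ((m:ℤ)+1)).eval x := by
  induction m with
  | zero =>
    constructor
    · simp [Chebyshev.U_zero]
    · simp [Chebyshev.U_zero, Chebyshev.U_one]; nlinarith
  | succ m ih =>
    obtain ⟨h1, h2⟩ := ih
    have hrec := U_eval_rec x m
    constructor
    · push_cast at h1 h2 ⊢
      linarith
    · push_cast at h1 h2 hrec ⊢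
      simp only [show ((m:ℤ)+1+1)=(m:ℤ)+2 from by ring]
      rw [hrec]
      nlinarith

private lemma U_neg_of_lt_neg_one {x : ℝ} (hx : x < -1) (m : ℕ) :
    1 ≤ (-1)^m * (Chebyshev.U ℝ (m:ℤ)).eval x ∧
      (-1)^m * (Chebyshev.U ℝ (m:ℤ)).eval x ≤ (-1)^(m+1) * (Chebyshev.U ℝ ((m:ℤ)+1)).eval x := by
  induction m with
  | zero =>
    constructor
    · simp [Chebyshev.U_zero]
    · simp [Chebyshev.U_zero, Chebyshev.U_one]; nlinarith
  | succ m ih =>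
    obtain ⟨h1, h2⟩ := ih
    have hrec := U_eval_rec x m
    constructor
    · push_cast at h1 h2 ⊢
      linarith
    · push_cast at h1 h2 hrec ⊢
      simp only [show ((m:ℤ)+1+1)=(m:ℤ)+2 from by ring]
      rw [hrec]
      rcases Nat.even_or_odd m with he | ho
      · have e1 : (-1:ℝ)^m = 1 := he.neg_one_pow
        have e2 : (-1:ℝ)^(m+1) = -1 := by rw [pow_succ, e1]; ring
        have e3 : (-1:ℝ)^(m+1+1) = 1 := by rw [pow_succ, e2]; ring
        rw [e1] at h1 h2; rw [e2] at h2 ⊢; rw [e3]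
        nlinarith
      · have e1 : (-1:ℝ)^m = -1 := ho.neg_one_pow
        have e2 : (-1:ℝ)^(m+1) = 1 := by rw [pow_succ, e1]; ring
        have e3 : (-1:ℝ)^(m+1+1) = -1 := by rw [pow_succ, e2]; ring
        rw [e1] at h1 h2; rw [e2] at h2 ⊢; rw [e3]
        nlinarith

private lemma U_root_iff (n : ℕ) (x : ℝ) :
    (Chebyshev.U ℝ ((n:ℤ)+2)).eval x = 0 ↔
      ∃ k : ℕ, 1 ≤ k ∧ k ≤ n+2 ∧ x = Real.cos (k * Real.pi / (n+3)) := by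
  constructor
  · intro hx
    -- rule out |x| > 1 and x = ±1
    rcases lt_trichotomy x 1 with hlt | heq | hgt
    rcases lt_trichotomy x (-1) with hlt' | heq' | hgt'
    · -- x < -1
      exfalso
      have := (U_neg_of_lt_neg_one hlt' (n+2)).1
      push_cast at this
      rw [hx] at this
      norm_num at this
    · -- x = -1
      exfalso
      have h := U_eval_neg_one (n+2)
      push_cast at h
      rw [heq'] at hx
      rw [hx] at h
      have h2 : ((-1:ℝ))^(n+2) * ((n:ℝ)+2+1) ≠ 0 := by
        apply mul_ne_zero
        · exact pow_ne_zero _ (by norm_num)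
        · positivity
      exact h2 h.symm
    · -- -1 < x < 1
      set θ := Real.arccos x with hθ
      have hxcos : Real.cos θ = x := Real.cos_arccos (le_of_lt hgt') (le_of_lt hlt)
      have hθpos : 0 < θ := by
        rw [hθ]
        apply Real.arccos_pos.2 hlt
      have hθlt : θ < Real.pi := by
        rcases lt_or_eq_of_le (Real.arccos_le_pi x) with h | h
        · exact h
        · exfalso
          have := Real.arccos_eq_pi.1 h
          linarith
      have hsin : Real.sin θ > 0 := Real.sin_pos_of_pos_of_lt_pi hθpos hθlt
      have key := Chebyshev.U_real_cos θ ((n:ℤ)+2)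
      push_cast at key
      rw [hxcos, hx] at key
      have hzero : Real.sin (((n:ℝ)+2+1) * θ) = 0 := by rw [← key]; ring
      rw [Real.sin_eq_zero_iff] at hzero
      obtain ⟨k, hk⟩ := hzero
      have hn3 : ((n:ℝ)+3) * θ = k * Real.pi := by push_cast at hk ⊢; linarith
      have hkpos : 0 < k := by
        by_contra h
        push_neg at h
        have : (k:ℝ) * Real.pi ≤ 0 := by
          apply mul_nonpos_of_nonpos_of_nonneg
          · exact_mod_cast h
          · exact Real.pi_pos.le
        nlinarith [Real.pi_pos]
      have hklt : (k:ℝ) < n+3 := by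
        have h1 : ((n:ℝ)+3) * θ < ((n:ℝ)+3) * Real.pi := by
          apply mul_lt_mul_of_pos_left hθlt (by positivity)
        rw [hn3] at h1
        have := Real.pi_pos
        nlinarith
      refine ⟨k.toNat, ?_, ?_, ?_⟩
      · omega
      · have : (k:ℝ) ≤ n+2 := by
          have : (k:ℤ) < n+3 := by exact_mod_cast hklt
          have : (k:ℤ) ≤ n+2 := by omega
          exact_mod_cast this
        have h2 : (k:ℤ) ≤ n+2 := by exact_mod_cast this
        omega
      · rw [← hxcos]
        congr 1
        have hkr : ((k.toNat : ℕ) : ℝ) = (k:ℝ) := by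
          have : ((k.toNat:ℤ)) = k := Int.toNat_of_nonneg (le_of_lt hkpos)
          exact_mod_cast congrArg (fun z : ℤ => (z:ℝ)) this
        rw [hkr]
        field_simp
        linarith [hn3]
    · -- x = 1
      exfalso
      have h := U_eval_one (n+2)
      push_cast at h
      rw [heq] at hx
      rw [hx] at h
      have hge : (0:ℝ) ≤ (n:ℝ) := Nat.cast_nonneg n
      linarith
    · -- x > 1
      exfalso
      have := (U_pos_of_one_lt hgt (n+2)).1
      push_cast at this
      rw [hx] at this
      norm_num at this
  · rintro ⟨k, hk1, hk2, rfl⟩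
    set θ := (k:ℝ) * Real.pi / (n+3) with hθ
    have hθpos : 0 < θ := by
      rw [hθ]
      apply div_pos
      · apply mul_pos
        · exact_mod_cast Nat.lt_of_lt_of_le Nat.zero_lt_one hk1
        · exact Real.pi_pos
      · positivity
    have hθlt : θ < Real.pi := by
      rw [hθ, div_lt_iff₀ (by positivity : (0:ℝ) < (n:ℝ)+3)]
      have : (k:ℝ) < (n:ℝ)+3 := by
        have : (k:ℝ) ≤ (n:ℝ)+2 := by exact_mod_cast hk2
        linarith
      nlinarith [Real.pi_pos]
    have hsin : Real.sin θ ≠ 0 := ne_of_gt (Real.sin_pos_of_pos_of_lt_pi hθpos hθlt)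
    have key := Chebyshev.U_real_cos θ ((n:ℤ)+2)
    push_cast at key
    have hz : Real.sin (((n:ℝ)+2+1) * θ) = 0 := by
      have he : ((n:ℝ)+2+1) * θ = k * Real.pi := by
        rw [hθ]
        field_simp
        ring
      rw [he]
      exact Real.sin_nat_mul_pi k
    rw [hz] at key
    exact (mul_eq_zero.1 key).resolve_right hsin


private lemma U_eval_rec' (x : ℝ) (m : ℤ) : (Chebyshev.U ℝ (m+2)).eval x
    = 2*x*(Chebyshev.U ℝ (m+1)).eval x - (Chebyshev.U ℝ m).eval x := by
  simp [Chebyshev.U_add_two]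

-- key telescoping identity
private lemma key_identity (n : ℕ) (x : ℝ) : ∀ i : ℕ,
    (Chebyshev.U ℝ ((i:ℤ)+1)).eval x * (Chebyshev.U ℝ ((n:ℤ)-(i:ℤ)+1)).eval x
      - (Chebyshev.U ℝ (i:ℤ)).eval x * (Chebyshev.U ℝ ((n:ℤ)-(i:ℤ))).eval x
    = (Chebyshev.U ℝ ((n:ℤ)+2)).eval x := by
  intro i
  induction i with
  | zero =>
    have h := U_eval_rec' x ((n:ℤ))
    simp only [Nat.cast_zero, sub_zero, zero_add, Chebyshev.U_zero, Chebyshev.U_one]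
    simp only [Polynomial.eval_one, Polynomial.eval_mul, Polynomial.eval_ofNat, Polynomial.eval_X]
    rw [h]; ring
  | succ i ih =>
    have e1 := U_eval_rec' x ((i:ℤ))
    have e2 := U_eval_rec' x ((n:ℤ)-(i:ℤ)-1)
    push_cast
    simp only [show ((i:ℤ)+1+1) = (i:ℤ)+2 from by ring,
      show ((n:ℤ)-((i:ℤ)+1)+1) = (n:ℤ)-(i:ℤ) from by ring,
      show ((n:ℤ)-(i:ℤ)-1+1) = (n:ℤ)-(i:ℤ) from by ring,
      show ((n:ℤ)-((i:ℤ)+1)) = (n:ℤ)-(i:ℤ)-1 from by ring]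
    simp only [show ((n:ℤ)-(i:ℤ)-1+2) = (n:ℤ)-(i:ℤ)+1 from by ring,
      show ((n:ℤ)-(i:ℤ)-1+1) = (n:ℤ)-(i:ℤ) from by ring] at e2
    rw [e1]
    rw [e2] at ih
    linear_combination ih

-- row sum decomposition
private lemma row_sum (n : ℕ) (α β : ℝ)
    (J : Matrix (Fin (n + 2)) (Fin (n + 2)) ℝ)
    (hJ : ∀ i j : Fin (n + 2), J i j =
      if (i : ℕ) = j then β
      else if (i : ℕ) + 1 = j then -α
      else if (j : ℕ) + 1 = i then -α
      else 0)
    (f : Fin (n+2) → ℝ) (i : Fin (n+2)) :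
    ∑ k, J i k * f k = β * f i
      + (if h : (i:ℕ)+1 < n+2 then -α * f ⟨(i:ℕ)+1, h⟩ else 0)
      + (if h : 0 < (i:ℕ) then -α * f ⟨(i:ℕ)-1, by omega⟩ else 0) := by
  have hsplit : ∀ k : Fin (n+2), J i k * f k =
      (if (i:ℕ) = (k:ℕ) then β * f k else 0)
      + (if (i:ℕ)+1 = (k:ℕ) then -α * f k else 0)
      + (if (k:ℕ)+1 = (i:ℕ) then -α * f k else 0) := by
    intro k
    rw [hJ]
    rcases eq_or_ne (i:ℕ) (k:ℕ) with h1 | h1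
    · rw [if_pos h1, if_pos h1, if_neg (by omega), if_neg (by omega)]
      ring
    · rw [if_neg h1, if_neg h1]
      rcases eq_or_ne ((i:ℕ)+1) (k:ℕ) with h2 | h2
      · rw [if_pos h2, if_pos h2, if_neg (by omega)]
        ring
      · rw [if_neg h2, if_neg h2]
        rcases eq_or_ne ((k:ℕ)+1) (i:ℕ) with h3 | h3
        · rw [if_pos h3, if_pos h3]; ring
        · rw [if_neg h3, if_neg h3]; ring
  rw [Finset.sum_congr rfl (fun k _ => hsplit k)]
  rw [Finset.sum_add_distrib, Finset.sum_add_distrib]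
  congr 1
  congr 1
  · rw [Finset.sum_eq_single i]
    · rw [if_pos rfl]
    · intro b _ hb
      rw [if_neg (fun h => hb (Fin.ext h.symm))]
    · intro h; exact absurd (Finset.mem_univ i) h
  · by_cases h : (i:ℕ)+1 < n+2
    · rw [dif_pos h, Finset.sum_eq_single (⟨(i:ℕ)+1, h⟩ : Fin (n+2))]
      · rw [if_pos rfl]
      · intro b _ hb
        rw [if_neg (fun hh => hb (Fin.ext hh.symm))]
      · intro hh; exact absurd (Finset.mem_univ _) hh
    · rw [dif_neg h]
      apply Finset.sum_eq_zero
      intro k _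
      rw [if_neg]
      intro hh
      omega
  · by_cases h : 0 < (i:ℕ)
    · rw [dif_pos h, Finset.sum_eq_single (⟨(i:ℕ)-1, by omega⟩ : Fin (n+2))]
      · rw [if_pos (by simp; omega)]
      · intro b _ hb
        rw [if_neg (fun hh => hb (Fin.ext (show (b:ℕ) = (i:ℕ)-1 by omega)))]
      · intro hh; exact absurd (Finset.mem_univ _) hh
    · rw [dif_neg h]
      apply Finset.sum_eq_zero
      intro k _
      rw [if_neg]
      omega

private noncomputable def rfun (n : ℕ) (α x : ℝ) (a b : ℕ) : ℝ :=
  (Chebyshev.U ℝ ((min a b : ℕ) : ℤ)).eval x *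
    (Chebyshev.U ℝ ((n:ℤ) - ((max a b : ℕ) : ℤ) + 1)).eval x /
    (α * (Chebyshev.U ℝ ((n:ℤ)+2)).eval x)

private lemma scalar_core (n : ℕ) (α β x : ℝ) (hα : α ≠ 0) (hβ : β = 2*α*x)
    (hu : (Chebyshev.U ℝ ((n:ℤ)+2)).eval x ≠ 0) (i j : ℕ) (hi : i < n+2) (hj : j < n+2) :
    β * rfun n α x i j
      + (if h : i+1 < n+2 then -α * rfun n α x (i+1) j else 0)
      + (if h : 0 < i then -α * rfun n α x (i-1) j else 0)
    = if i = j then 1 else 0 := by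
  set D := α * (Chebyshev.U ℝ ((n:ℤ)+2)).eval x with hDdef
  have hD : D ≠ 0 := mul_ne_zero hα hu
  have hc3 : ∀ A B C : ℝ, β * (A / D) + -α * (B / D) + -α * (C / D)
      = (β*A - α*B - α*C) / D := by intro A B C; field_simp; ring
  have hc2b : ∀ A B : ℝ, β * (A / D) + -α * (B / D) + 0 = (β*A - α*B) / D := by
    intro A B; field_simp; ring
  have hc2c : ∀ A C : ℝ, β * (A / D) + 0 + -α * (C / D) = (β*A - α*C) / D := by
    intro A C; field_simp; ring
  subst hβ
  rcases Nat.lt_trichotomy i j with hij | rfl | hij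
  · -- i < j
    have hb : i+1 < n+2 := by omega
    rw [dif_pos hb, if_neg (by omega : ¬ i = j)]
    have m1 : min i j = i := by omega
    have m2 : max i j = j := by omega
    have m3 : min (i+1) j = i+1 := by omega
    have m4 : max (i+1) j = j := by omega
    by_cases h0 : 0 < i
    · obtain ⟨i', rfl⟩ : ∃ i', i = i'+1 := ⟨i-1, by omega⟩
      rw [dif_pos h0]
      have m5 : min (i'+1-1) j = i' := by omega
      have m6 : max (i'+1-1) j = j := by omega
      simp only [rfun, m1, m2, m3, m4, m5, m6]
      rw [hc3, _root_.div_eq_zero_iff]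
      left
      have e1 := U_eval_rec' x ((i':ℤ))
      push_cast
      simp only [show ((i':ℤ)+1+1) = (i':ℤ)+2 from by ring]
      rw [e1]; ring
    · have hi0 : i = 0 := by omega
      subst hi0
      rw [dif_neg h0]
      simp only [rfun, m1, m2, m3, m4]
      rw [hc2b, _root_.div_eq_zero_iff]
      left
      push_cast
      simp [Chebyshev.U_zero, Chebyshev.U_one]
      ring
  · -- i = j
    rw [if_pos rfl]
    by_cases h0 : 0 < i
    · by_cases hb : i+1 < n+2
      · -- interior
        obtain ⟨i', rfl⟩ : ∃ i', i = i'+1 := ⟨i-1, by omega⟩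
        rw [dif_pos hb, dif_pos h0]
        have m1 : min (i'+1) (i'+1) = i'+1 := by omega
        have m2 : max (i'+1) (i'+1) = i'+1 := by omega
        have m3 : min (i'+1+1) (i'+1) = i'+1 := by omega
        have m4 : max (i'+1+1) (i'+1) = i'+2 := by omega
        have m5 : min (i'+1-1) (i'+1) = i' := by omega
        have m6 : max (i'+1-1) (i'+1) = i'+1 := by omega
        simp only [rfun, m1, m2, m3, m4, m5, m6]
        rw [hc3, div_eq_one_iff_eq hD]
        have k1 := key_identity n x (i'+1)
        have e1 := U_eval_rec' x ((i':ℤ))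
        push_cast at k1 ⊢
        simp only [show ((i':ℤ)+1+1) = (i':ℤ)+2 from by ring,
          show ((n:ℤ)-((i':ℤ)+1)+1) = (n:ℤ)-(i':ℤ) from by ring,
          show ((n:ℤ)-((i':ℤ)+2)+1) = (n:ℤ)-(i':ℤ)-1 from by ring,
          show ((n:ℤ)-((i':ℤ)+1)) = (n:ℤ)-(i':ℤ)-1 from by ring,
          show ((n:ℤ)-(i':ℤ)-1+1) = (n:ℤ)-(i':ℤ) from by ring] at k1 ⊢
        rw [hDdef]
        linear_combination α * k1 - α * (Chebyshev.U ℝ ((n:ℤ)-(i':ℤ))).eval x * e1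
      · -- i = n+1
        have hi1 : i = n+1 := by omega
        subst hi1
        rw [dif_neg hb, dif_pos h0]
        have m1 : min (n+1) (n+1) = n+1 := by omega
        have m2 : max (n+1) (n+1) = n+1 := by omega
        have m5 : min (n+1-1) (n+1) = n := by omega
        have m6 : max (n+1-1) (n+1) = n+1 := by omega
        simp only [rfun, m1, m2, m5, m6]
        rw [hc2c, div_eq_one_iff_eq hD]
        have e := U_eval_rec' x ((n:ℤ))
        push_cast at e ⊢
        simp only [show ((n:ℤ)-((n:ℤ)+1)+1) = (0:ℤ) from by ring]
        simp only [Chebyshev.U_zero, Polynomial.eval_one]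
        rw [hDdef]
        linear_combination (-α) * e
    · -- i = 0
      have hi0 : i = 0 := by omega
      subst hi0
      rw [dif_pos (by omega : 0+1 < n+2), dif_neg h0]
      have m1 : min 0 0 = 0 := by omega
      have m2 : max 0 0 = 0 := by omega
      have m3 : min (0+1) 0 = 0 := by omega
      have m4 : max (0+1) 0 = 1 := by omega
      simp only [rfun, m1, m2, m3, m4]
      rw [hc2b, div_eq_one_iff_eq hD]
      have e := U_eval_rec' x ((n:ℤ))
      push_cast at e ⊢
      simp only [show ((n:ℤ)-0+1) = (n:ℤ)+1 from by ring,
        show ((n:ℤ)-1+1) = (n:ℤ) from by ring]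
      simp only [Chebyshev.U_zero, Polynomial.eval_one]
      rw [hDdef]
      linear_combination (-α) * e
  · -- i > j
    rw [if_neg (by omega : ¬ i = j)]
    have h0 : 0 < i := by omega
    obtain ⟨i', rfl⟩ : ∃ i', i = i'+1 := ⟨i-1, by omega⟩
    have m1 : min (i'+1) j = j := by omega
    have m2 : max (i'+1) j = i'+1 := by omega
    have m5 : min (i'+1-1) j = j := by omega
    have m6 : max (i'+1-1) j = i' := by omega
    by_cases hb : i'+1+1 < n+2
    · rw [dif_pos hb, dif_pos h0]
      have m3 : min (i'+1+1) j = j := by omega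
      have m4 : max (i'+1+1) j = i'+2 := by omega
      simp only [rfun, m1, m2, m3, m4, m5, m6]
      rw [hc3, _root_.div_eq_zero_iff]
      left
      have e2 := U_eval_rec' x ((n:ℤ)-(i':ℤ)-1)
      push_cast at e2 ⊢
      simp only [show ((n:ℤ)-((i':ℤ)+1)+1) = (n:ℤ)-(i':ℤ) from by ring,
        show ((n:ℤ)-((i':ℤ)+2)+1) = (n:ℤ)-(i':ℤ)-1 from by ring,
        show ((n:ℤ)-(i':ℤ)+1) = (n:ℤ)-(i':ℤ)+1 from rfl,
        show ((n:ℤ)-(i':ℤ)-1+2) = (n:ℤ)-(i':ℤ)+1 from by ring,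
        show ((n:ℤ)-(i':ℤ)-1+1) = (n:ℤ)-(i':ℤ) from by ring] at e2 ⊢
      linear_combination (-α) * (Chebyshev.U ℝ (j:ℤ)).eval x * e2
    · -- i = n+1
      have hi1 : i' = n := by omega
      subst hi1
      rw [dif_neg hb, dif_pos h0]
      simp only [rfun, m1, m2, m5, m6]
      rw [hc2c, _root_.div_eq_zero_iff]
      left
      push_cast
      simp only [show ((i':ℤ)-((i':ℤ)+1)+1) = (0:ℤ) from by ring,
        show ((i':ℤ)-(i':ℤ)+1) = (1:ℤ) from by ring]
      simp [Chebyshev.U_zero, Chebyshev.U_one]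
      ring

private lemma JR_eq_one (n : ℕ) (α β x : ℝ) (hα : α ≠ 0) (hβ : β = 2*α*x)
    (hu : (Chebyshev.U ℝ ((n:ℤ)+2)).eval x ≠ 0)
    (J : Matrix (Fin (n + 2)) (Fin (n + 2)) ℝ)
    (hJ : ∀ i j : Fin (n + 2), J i j =
      if (i : ℕ) = j then β
      else if (i : ℕ) + 1 = j then -α
      else if (j : ℕ) + 1 = i then -α
      else 0) :
    J * (Matrix.of fun k s : Fin (n+2) => rfun n α x (k:ℕ) (s:ℕ)) = 1 := by
  ext i j
  rw [Matrix.mul_apply]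
  have hr := row_sum n α β J hJ (fun k => rfun n α x (k:ℕ) (j:ℕ)) i
  have h := scalar_core n α β x hα hβ hu (i:ℕ) (j:ℕ) i.isLt j.isLt
  rw [Matrix.one_apply]
  simp only [Fin.val_inj] at h
  simp only [Matrix.of_apply]
  rw [hr]
  exact h

/-- The symmetric tridiagonal Toeplitz matrix `J(α,β)` of size `n+2` (diagonal `β`,
off-diagonals `−α`, `α ≠ 0`) is invertible iff `β ≠ 2α·cos(kπ/(n+3))` for
`k = 1,…,n+2`; in that case the entries of its inverse `R` are
`r_{ks} = U_{min{k,s}}(β/2α)·U_{n−max{k,s}+1}(β/2α)/(α·U_{n+2}(β/2α))` and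
`det R = 1/(α^{n+2}·U_{n+2}(β/2α))`. -/
theorem symmetric_toeplitz_jacobi_inverse (n : ℕ) (α β : ℝ) (hα : α ≠ 0)
    (J : Matrix (Fin (n + 2)) (Fin (n + 2)) ℝ)
    (hJ : ∀ i j : Fin (n + 2), J i j =
      if (i : ℕ) = j then β
      else if (i : ℕ) + 1 = j then -α
      else if (j : ℕ) + 1 = i then -α
      else 0) :
    (IsUnit J ↔ ∀ k : ℕ, 1 ≤ k → k ≤ n + 2 →
      β ≠ 2 * α * Real.cos (k * Real.pi / (n + 3))) ∧
    (IsUnit J →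
      (∀ k s : Fin (n + 2),
        J⁻¹ k s =
          (Polynomial.Chebyshev.U ℝ (min (k : ℕ) (s : ℕ))).eval (β / (2 * α)) *
            (Polynomial.Chebyshev.U ℝ ((n : ℤ) - max (k : ℕ) (s : ℕ) + 1)).eval
              (β / (2 * α)) /
            (α * (Polynomial.Chebyshev.U ℝ ((n : ℤ) + 2)).eval (β / (2 * α)))) ∧
      (J⁻¹).det =
        1 / (α ^ (n + 2) * (Polynomial.Chebyshev.U ℝ ((n : ℤ) + 2)).eval (β / (2 * α)))) := by
  set x : ℝ := β / (2 * α) with hx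
  have hβx : β = 2 * α * x := by
    rw [hx]; field_simp
  have hdet : J.det = α^(n+2) * (Chebyshev.U ℝ ((n:ℤ)+2)).eval x := by
    have := det_jacobi α β x hβx (n+2) J hJ
    rw [this]
    push_cast
    ring_nf
  have hunit : IsUnit J ↔ (Chebyshev.U ℝ ((n:ℤ)+2)).eval x ≠ 0 := by
    rw [Matrix.isUnit_iff_isUnit_det, hdet, isUnit_iff_ne_zero]
    constructor
    · intro h hu; exact h (by rw [hu, mul_zero])
    · intro h; exact mul_ne_zero (pow_ne_zero _ hα) h
  constructor
  · rw [hunit]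
    constructor
    · intro h k hk1 hk2 hcon
      apply h
      rw [(U_root_iff n x)]
      exact ⟨k, hk1, hk2, by rw [hx, hcon]; field_simp⟩
    · intro h hu
      obtain ⟨k, hk1, hk2, hxe⟩ := (U_root_iff n x).1 hu
      exact h k hk1 hk2 (by rw [hβx, hxe])
  · intro hJu
    have hu : (Chebyshev.U ℝ ((n:ℤ)+2)).eval x ≠ 0 := hunit.1 hJu
    have hJR : J * (Matrix.of fun k s : Fin (n+2) => rfun n α x (k:ℕ) (s:ℕ)) = 1 :=
      JR_eq_one n α β x hα hβx hu J hJ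
    have hinv := Matrix.inv_eq_right_inv hJR
    constructor
    · intro k s
      rw [hinv]
      simp only [Matrix.of_apply, rfun]
      push_cast
      ring_nf
    · rw [Matrix.det_nonsing_inv, Ring.inverse_eq_inv', hdet, one_div]
end
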